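/- arXiv:1301.4196 — 7 statements merged into one kernel-verified Lean document; each statement's English description precedes it below -/
import Mathlib

section
/- Let σ > −1/2. For every smooth function φ : ℝ → ℝ and every m ∈ ℕ, (T_σ^m φ)(0) = (m!_σ / m!)·φ^{(m)}(0), where T_σ^m is the m-th iterate of the Dunkl operator. -/
open MeasureTheory Real

noncomputable section

/-- The even part of a function. -/
def evenPart (φ : ℝ → ℝ) : ℝ → ℝ := fun x => (φ x + φ (-x)) / 2

/-- The odd part of a function. -/
def oddPart (φ : ℝ → ℝ) : ℝ → ℝ := fun x => (φ x - φ (-x)) / 2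

/-- For an odd smooth function ψ, `invX ψ` is the smooth function η with ψ(x) = x·η(x). -/
def invX (ψ : ℝ → ℝ) : ℝ → ℝ := fun x => if x = 0 then deriv ψ 0 else ψ x / x

/-- The Dunkl operator `T_σ φ = φ' + 2σ·x⁻¹(φ_odd)`. -/
def dunklT (σ : ℝ) (φ : ℝ → ℝ) : ℝ → ℝ := fun x => deriv φ x + 2 * σ * invX (oddPart φ) x

/-- The Dunkl harmonic oscillator `L_σ φ = -T_σ(T_σ φ) + s²x²φ`. -/
def dunklL (σ s : ℝ) (φ : ℝ → ℝ) : ℝ → ℝ :=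
  fun x => -dunklT σ (dunklT σ φ) x + s ^ 2 * x ^ 2 * φ x

/-- Index pairs (i, j) with i + j ≤ m. -/
def idx (m : ℕ) : Finset (ℕ × ℕ) :=
  (Finset.range (m + 1) ×ˢ Finset.range (m + 1)).filter fun p => p.1 + p.2 ≤ m

def idxE (m : ℕ) : Finset (ℕ × ℕ) := (idx m).filter fun p => Even (p.1 + p.2)

def idxO (m : ℕ) : Finset (ℕ × ℕ) := (idx m).filter fun p => ¬ Even (p.1 + p.2)

/-- The Schwartz norm ‖φ‖_{S^m}. -/
def SNorm (m : ℕ) (φ : ℝ → ℝ) : ℝ :=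
  ∑ p ∈ idx m, ⨆ x : ℝ, |x ^ p.1 * iteratedDeriv p.2 φ x|

/-- Generic norm for σ ≥ 0: Σ_{i+j≤m} sup_x |x|^σ |x^i g_j(x)|. -/
def gNormNonneg (σ : ℝ) (m : ℕ) (g : ℕ → ℝ → ℝ) : ℝ :=
  ∑ p ∈ idx m, ⨆ x : ℝ, |x| ^ σ * |x ^ p.1 * g p.2 x|

/-- Generic norm for σ < 0 on even functions. -/
def gNormNegE (σ : ℝ) (m : ℕ) (g : ℕ → ℝ → ℝ) : ℝ :=
  (∑ p ∈ idxE m, ((⨆ x : {x : ℝ // 0 < |x| ∧ |x| ≤ 1}, |(x : ℝ) ^ p.1 * g p.2 x|) +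
      ⨆ x : {x : ℝ // 1 ≤ |x|}, |(x : ℝ)| ^ σ * |(x : ℝ) ^ p.1 * g p.2 x|)) +
  ∑ p ∈ idxO m, ⨆ x : {x : ℝ // x ≠ 0}, |(x : ℝ)| ^ σ * |(x : ℝ) ^ p.1 * g p.2 x|

/-- Generic norm for σ < 0 on odd functions. -/
def gNormNegO (σ : ℝ) (m : ℕ) (g : ℕ → ℝ → ℝ) : ℝ :=
  (∑ p ∈ idxO m, ((⨆ x : {x : ℝ // 0 < |x| ∧ |x| ≤ 1}, |(x : ℝ) ^ p.1 * g p.2 x|) +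
      ⨆ x : {x : ℝ // 1 ≤ |x|}, |(x : ℝ)| ^ σ * |(x : ℝ) ^ p.1 * g p.2 x|)) +
  ∑ p ∈ idxE m, ⨆ x : {x : ℝ // x ≠ 0}, |(x : ℝ)| ^ σ * |(x : ℝ) ^ p.1 * g p.2 x|

/-- The family of iterated derivatives of φ. -/
def derivFam (φ : ℝ → ℝ) : ℕ → ℝ → ℝ := fun j => iteratedDeriv j φ

/-- The family of iterates of the Dunkl operator applied to φ. -/
def dunklFam (σ : ℝ) (φ : ℝ → ℝ) : ℕ → ℝ → ℝ := fun j => (dunklT σ)^[j] φ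

/-- Weakly perturbed Schwartz norm ‖φ‖_{S_{w,σ}^m} for even φ. -/
def SwNormEven (σ : ℝ) (m : ℕ) (φ : ℝ → ℝ) : ℝ :=
  if 0 ≤ σ then gNormNonneg σ m (derivFam φ) else gNormNegE σ m (derivFam φ)

/-- Weakly perturbed Schwartz norm ‖φ‖_{S_{w,σ}^m} for odd φ. -/
def SwNormOdd (σ : ℝ) (m : ℕ) (φ : ℝ → ℝ) : ℝ :=
  if 0 ≤ σ then gNormNonneg σ m (derivFam φ) else gNormNegO σ m (derivFam φ)

/-- Perturbed Schwartz norm ‖φ‖_{S_σ^m} for even φ. -/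
def SpNormEven (σ : ℝ) (m : ℕ) (φ : ℝ → ℝ) : ℝ :=
  if 0 ≤ σ then gNormNonneg σ m (dunklFam σ φ) else gNormNegE σ m (dunklFam σ φ)

/-- Perturbed Schwartz norm ‖φ‖_{S_σ^m} for odd φ. -/
def SpNormOdd (σ : ℝ) (m : ℕ) (φ : ℝ → ℝ) : ℝ :=
  if 0 ≤ σ then gNormNonneg σ m (dunklFam σ φ) else gNormNegO σ m (dunklFam σ φ)

/-- Perturbed Schwartz norm for a general φ: the sum of the norms of its even and odd parts. -/
def SpNorm (σ : ℝ) (m : ℕ) (φ : ℝ → ℝ) : ℝ :=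
  SpNormEven σ m (evenPart φ) + SpNormOdd σ m (oddPart φ)

/-- The perturbed Sobolev norm ‖φ‖_{W_σ^m} = ⟨(1+L_σ)^m φ, φ⟩_σ^{1/2}. -/
def WNorm (σ s : ℝ) (m : ℕ) (φ : ℝ → ℝ) : ℝ :=
  Real.sqrt (∫ x : ℝ, ((fun ψ => ψ + dunklL σ s ψ)^[m] φ) x * φ x * |x| ^ (2 * σ))

/-- The Dunkl creation operator `B' φ = sxφ - T_σ φ`. -/
def Bop' (σ s : ℝ) (φ : ℝ → ℝ) : ℝ → ℝ := fun x => s * x * φ x - dunklT σ φ x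

/-- The generalized Hermite functions φ_k. -/
def hermiteFn (σ s : ℝ) : ℕ → ℝ → ℝ
  | 0 => fun x => s ^ ((2 * σ + 1) / 4) * (Real.Gamma (σ + 1 / 2)) ^ (-(1 / 2) : ℝ) *
      Real.exp (-s * x ^ 2 / 2)
  | (k + 1) =>
      if Even (k + 1) then
        fun x => (2 * ((k : ℝ) + 1) * s) ^ (-(1 / 2) : ℝ) * Bop' σ s (hermiteFn σ s k) x
      else
        fun x => (2 * ((k : ℝ) + 1 + 2 * σ) * s) ^ (-(1 / 2) : ℝ) * Bop' σ s (hermiteFn σ s k) x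

/-- The perturbed factorial m!_σ. -/
def pfact (σ : ℝ) : ℕ → ℝ
  | 0 => 1
  | (m + 1) =>
      if Even (m + 1) then pfact σ m * ((m : ℝ) + 1)
      else pfact σ m * ((m : ℝ) + 1 + 2 * σ)

/-- The generalized Hermite polynomials p_k = φ_k · e^{sx²/2}. -/
def genHermitePoly (σ s : ℝ) (k : ℕ) : ℝ → ℝ :=
  fun x => hermiteFn σ s k x * Real.exp (s * x ^ 2 / 2)

end

section AuxDunkl

open intervalIntegral Set
open scoped ContDiff

noncomputable def Gfam (f : ℝ → ℝ) (n : ℕ) (x : ℝ) : ℝ :=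
  ∫ t in (0:ℝ)..1, t ^ n * iteratedDeriv (n + 1) f (t * x)

lemma contDiff_iteratedDeriv_aux {f : ℝ → ℝ} (hf : ContDiff ℝ ∞ f) (k : ℕ) :
    ContDiff ℝ ∞ (iteratedDeriv k f) := by
  rw [iteratedDeriv_eq_iterate]; exact hf.iterate_deriv k

lemma hasDerivAt_Gfam {f : ℝ → ℝ} (hf : ContDiff ℝ ∞ f) (n : ℕ) (x₀ : ℝ) :
    HasDerivAt (Gfam f n) (Gfam f (n + 1) x₀) x₀ := by
  have hcont : ∀ k, Continuous (iteratedDeriv k f) := fun k =>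
    (contDiff_iteratedDeriv_aux hf k).continuous
  set R : ℝ := |x₀| + 1 with hR
  have hR1 : (1:ℝ) ≤ R := by simp only [hR]; have := abs_nonneg x₀; linarith
  obtain ⟨C, hC⟩ : ∃ C, ∀ y ∈ Set.Icc (-R) R, ‖iteratedDeriv (n + 2) f y‖ ≤ C :=
    (isCompact_Icc).exists_bound_of_continuousOn (hcont (n+2)).continuousOn
  have hC0 : 0 ≤ C := le_trans (norm_nonneg _) (hC 0 ⟨by linarith, by linarith⟩)
  have hmem : ∀ t ∈ Set.uIoc (0:ℝ) 1, ∀ x ∈ Metric.ball x₀ 1, t * x ∈ Set.Icc (-R) R := by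
    intro t ht x hx
    rw [Set.uIoc_of_le (by norm_num : (0:ℝ) ≤ 1)] at ht
    have hxb : |x| ≤ R := by
      have h1 : dist x x₀ < 1 := Metric.mem_ball.mp hx
      rw [Real.dist_eq] at h1
      have : |x| ≤ |x₀| + |x - x₀| := by
        calc |x| = |x₀ + (x - x₀)| := by ring_nf
        _ ≤ |x₀| + |x - x₀| := abs_add_le _ _
      linarith
    have : |t * x| ≤ R := by
      rw [abs_mul]
      calc |t| * |x| ≤ 1 * R := by
            apply mul_le_mul _ hxb (abs_nonneg x) (by norm_num)
            rw [abs_of_pos ht.1]; exact ht.2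
        _ = R := one_mul R
    exact abs_le.mp this
  have key := intervalIntegral.hasDerivAt_integral_of_dominated_loc_of_deriv_le
    (F := fun (x : ℝ) (t : ℝ) => t ^ n * iteratedDeriv (n + 1) f (t * x))
    (F' := fun (x : ℝ) (t : ℝ) => t ^ (n + 1) * iteratedDeriv (n + 2) f (t * x))
    (x₀ := x₀) (a := (0:ℝ)) (b := (1:ℝ)) (μ := MeasureTheory.volume)
    (bound := fun _ => C) (s := Metric.ball x₀ 1) (Metric.ball_mem_nhds x₀ one_pos) ?_ ?_ ?_ ?_ ?_ ?_
  · exact key.2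
  · filter_upwards with x
    exact (((continuous_id.pow n).mul
      ((hcont (n+1)).comp (continuous_id.mul continuous_const))).aestronglyMeasurable).restrict
  · exact (((continuous_id.pow n).mul
      ((hcont (n+1)).comp (continuous_id.mul continuous_const))).intervalIntegrable 0 1)
  · exact (((continuous_id.pow (n+1)).mul
      ((hcont (n+2)).comp (continuous_id.mul continuous_const))).aestronglyMeasurable).restrict
  · filter_upwards with t ht x hx
    have h1 : |t| ≤ 1 := by
      rw [Set.uIoc_of_le (by norm_num : (0:ℝ) ≤ 1)] at ht
      rw [abs_of_pos ht.1]; exact ht.2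
    have h2 := hC _ (hmem t ht x hx)
    rw [Real.norm_eq_abs, abs_mul, abs_pow]
    calc |t| ^ (n+1) * |iteratedDeriv (n + 2) f (t * x)| ≤ 1 * C := by
          apply mul_le_mul (pow_le_one₀ (abs_nonneg t) h1) _ (abs_nonneg _) (by norm_num)
          simpa using h2
      _ = C := one_mul C
  · exact intervalIntegrable_const
  · filter_upwards with t _ x _
    have h1 : HasDerivAt (iteratedDeriv (n+1) f)
        (iteratedDeriv (n+2) f (t*x)) (t*x) := by
      have hd := (((contDiff_iteratedDeriv_aux hf (n+1)).differentiable
        (by simp)) (t*x)).hasDerivAt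
      rwa [show iteratedDeriv (n+2) f = deriv (iteratedDeriv (n+1) f) from iteratedDeriv_succ]
    have h2 : HasDerivAt (fun y : ℝ => t * y) (t * 1) x := (hasDerivAt_id x).const_mul t
    have h3 := (h1.comp x h2).const_mul (t ^ n)
    exact h3.congr_deriv (by ring)

lemma iteratedDeriv_Gfam {f : ℝ → ℝ} (hf : ContDiff ℝ ∞ f) (m : ℕ) :
    iteratedDeriv m (Gfam f 0) = Gfam f m := by
  induction m with
  | zero => simp [iteratedDeriv_zero]
  | succ m ih =>
    funext x
    rw [iteratedDeriv_succ, ih]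
    exact (hasDerivAt_Gfam hf m x).deriv

lemma invX_eq_Gfam {f : ℝ → ℝ} (hf : ContDiff ℝ ∞ f) (hf0 : f 0 = 0) :
    invX f = Gfam f 0 := by
  have hderiv : Continuous (deriv f) := (contDiff_infty_iff_deriv.mp hf).2.continuous
  funext x
  rcases eq_or_ne x 0 with rfl | hx
  · simp [invX, Gfam, iteratedDeriv_one]
  · have : Gfam f 0 x = f x / x := by
      have h1 : Gfam f 0 x = ∫ t in (0:ℝ)..1, deriv f (t * x) := by
        simp [Gfam, iteratedDeriv_one]
      rw [h1, intervalIntegral.integral_comp_mul_right (fun y => deriv f y) hx, zero_mul, one_mul,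
        intervalIntegral.integral_deriv_eq_sub
          (fun y _ => (hf.differentiable (by simp)) y)
          (hderiv.intervalIntegrable 0 x),
        hf0, sub_zero, smul_eq_mul]
      rw [div_eq_inv_mul]
    rw [this]
    simp [invX, if_neg hx]

lemma contDiff_invX {f : ℝ → ℝ} (hf : ContDiff ℝ ∞ f) (hf0 : f 0 = 0) :
    ContDiff ℝ ∞ (invX f) := by
  rw [invX_eq_Gfam hf hf0]
  apply contDiff_of_differentiable_iteratedDeriv
  intro m _
  rw [iteratedDeriv_Gfam hf]
  exact fun x => (hasDerivAt_Gfam hf m x).differentiableAt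

lemma iteratedDeriv_invX_zero {f : ℝ → ℝ} (hf : ContDiff ℝ ∞ f) (hf0 : f 0 = 0) (m : ℕ) :
    iteratedDeriv m (invX f) 0 = iteratedDeriv (m+1) f 0 / (m+1) := by
  rw [invX_eq_Gfam hf hf0, iteratedDeriv_Gfam hf]
  simp only [Gfam, mul_zero]
  rw [intervalIntegral.integral_mul_const, integral_pow]
  have : ((m:ℝ)+1) ≠ 0 := by positivity
  field_simp
  simp

lemma iteratedDeriv_fun_add_aux {f g : ℝ → ℝ} (hf : ContDiff ℝ ∞ f) (hg : ContDiff ℝ ∞ g)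
    (n : ℕ) (x : ℝ) :
    iteratedDeriv n (fun y => f y + g y) x = iteratedDeriv n f x + iteratedDeriv n g x := by
  simp only [← iteratedDerivWithin_univ]
  exact iteratedDerivWithin_add (Set.mem_univ x) uniqueDiffOn_univ
    ((hf.of_le (by exact_mod_cast le_top)).contDiffWithinAt)
    ((hg.of_le (by exact_mod_cast le_top)).contDiffWithinAt)

lemma iteratedDeriv_fun_sub_aux {f g : ℝ → ℝ} (hf : ContDiff ℝ ∞ f) (hg : ContDiff ℝ ∞ g)
    (n : ℕ) (x : ℝ) :
    iteratedDeriv n (fun y => f y - g y) x = iteratedDeriv n f x - iteratedDeriv n g x := by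
  simp only [← iteratedDerivWithin_univ]
  exact iteratedDerivWithin_sub (Set.mem_univ x) uniqueDiffOn_univ
    ((hf.of_le (by exact_mod_cast le_top)).contDiffWithinAt)
    ((hg.of_le (by exact_mod_cast le_top)).contDiffWithinAt)

lemma iteratedDeriv_fun_const_mul {f : ℝ → ℝ} (hf : ContDiff ℝ ∞ f) (c : ℝ)
    (n : ℕ) (x : ℝ) :
    iteratedDeriv n (fun y => c * f y) x = c * iteratedDeriv n f x := by
  simp only [← iteratedDerivWithin_univ]
  exact iteratedDerivWithin_const_mul (Set.mem_univ x) uniqueDiffOn_univ c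
    ((hf.of_le (by exact_mod_cast le_top)).contDiffWithinAt)

lemma oddPart_contDiff {φ : ℝ → ℝ} (hφ : ContDiff ℝ ∞ φ) : ContDiff ℝ ∞ (oddPart φ) :=
  (hφ.sub (hφ.comp contDiff_neg)).div_const 2

lemma oddPart_zero (φ : ℝ → ℝ) : oddPart φ 0 = 0 := by simp [oddPart]

lemma iteratedDeriv_oddPart {φ : ℝ → ℝ} (hφ : ContDiff ℝ ∞ φ) (n : ℕ) :
    iteratedDeriv n (oddPart φ) 0 =
      (iteratedDeriv n φ 0 - (-1:ℝ)^n * iteratedDeriv n φ 0) / 2 := by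
  have h2 : oddPart φ = fun x => (2⁻¹:ℝ) * (φ x - φ (-x)) := by
    funext x; simp [oddPart]; ring
  rw [h2, iteratedDeriv_fun_const_mul (f := fun x => φ x - φ (-x))
      (by exact hφ.sub (hφ.comp contDiff_neg)) _ n 0,
    iteratedDeriv_fun_sub_aux (g := fun x => φ (-x)) hφ (by exact hφ.comp contDiff_neg) n 0,
    iteratedDeriv_comp_neg n φ 0]
  simp only [neg_zero, smul_eq_mul]
  ring

lemma dunklT_contDiff (σ : ℝ) {φ : ℝ → ℝ} (hφ : ContDiff ℝ ∞ φ) :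
    ContDiff ℝ ∞ (dunklT σ φ) := by
  have h1 : ContDiff ℝ ∞ (deriv φ) := (contDiff_infty_iff_deriv.mp hφ).2
  have h2 : ContDiff ℝ ∞ (invX (oddPart φ)) :=
    contDiff_invX (oddPart_contDiff hφ) (oddPart_zero φ)
  exact h1.add (contDiff_const.mul h2)

lemma iteratedDeriv_dunklT (σ : ℝ) {φ : ℝ → ℝ} (hφ : ContDiff ℝ ∞ φ) (m : ℕ) :
    iteratedDeriv m (dunklT σ φ) 0 =
      iteratedDeriv (m+1) φ 0 + 2*σ*(iteratedDeriv (m+1) (oddPart φ) 0 / (m+1)) := by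
  have hop := oddPart_contDiff hφ
  have h0 := oddPart_zero φ
  have h1 : ContDiff ℝ ∞ (deriv φ) := (contDiff_infty_iff_deriv.mp hφ).2
  have h2 : ContDiff ℝ ∞ (invX (oddPart φ)) := contDiff_invX hop h0
  have hshow : dunklT σ φ = fun x => deriv φ x + (2*σ) * invX (oddPart φ) x := rfl
  rw [hshow, iteratedDeriv_fun_add_aux h1 (contDiff_const.mul h2) m 0,
    iteratedDeriv_fun_const_mul h2 (2*σ) m 0,
    iteratedDeriv_invX_zero hop h0 m, ← iteratedDeriv_succ']

lemma dunkl_main_aux (σ : ℝ) : ∀ (m : ℕ) (φ : ℝ → ℝ), ContDiff ℝ ∞ φ →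
    (dunklT σ)^[m] φ 0 = pfact σ m / (m.factorial : ℝ) * iteratedDeriv m φ 0 := by
  intro m
  induction m with
  | zero => intro φ hφ; simp [pfact]
  | succ m ih =>
    intro φ hφ
    rw [Function.iterate_succ_apply, ih _ (dunklT_contDiff σ hφ), iteratedDeriv_dunklT σ hφ m,
      iteratedDeriv_oddPart hφ (m+1)]
    have hm1 : ((m:ℝ)+1) ≠ 0 := by positivity
    have hfac : (m.factorial : ℝ) ≠ 0 := by exact_mod_cast m.factorial_ne_zero
    have hfacs : ((m+1).factorial : ℝ) = ((m:ℝ)+1) * m.factorial := by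
      push_cast [Nat.factorial_succ]; ring
    rcases Nat.even_or_odd (m+1) with he | ho
    · have hp : pfact σ (m+1) = pfact σ m * ((m:ℝ)+1) := by
        simp only [pfact, if_pos he]
      rw [he.neg_one_pow, hp, hfacs]
      field_simp
      ring
    · have hp : pfact σ (m+1) = pfact σ m * ((m:ℝ)+1+2*σ) := by
        simp only [pfact, if_neg (Nat.not_even_iff_odd.mpr ho)]
      rw [ho.neg_one_pow, hp, hfacs]
      field_simp
      ring

end AuxDunkl

theorem dunklT_iterate_apply_zero (σ : ℝ) (hσ : -(1/2) < σ) :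
    ∀ φ : ℝ → ℝ, ContDiff ℝ (⊤ : ℕ∞) φ → ∀ m : ℕ,
      (dunklT σ)^[m] φ 0 = pfact σ m / (m.factorial : ℝ) * iteratedDeriv m φ 0 := by
  intro φ hφ m
  exact dunkl_main_aux σ m φ (hφ.of_le (by simp))
end

section
/- Let σ > −1/2 and s > 0, and let p_k(x) = φ_k(x)·e^{sx²/2} (these are the generalized Hermite polynomials). Then for every odd k ∈ ℕ and every x ≠ 0: p_k(x)/x = Σ_{ℓ ∈ {0,2,4,…,k−1}} (−1)^{(k−ℓ−1)/2} · √( (2s·∏_{r∈{ℓ+2,ℓ+4,…,k−1}} r) / (∏_{r∈{ℓ+1,ℓ+3,…,k}} (r+2σ)) ) · p_ℓ(x), where an empty product equals 1 (so the numerator product is 1 when ℓ = k−1). -/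
open MeasureTheory Real

/-!
Write `φ_k = p_k · e^{-sx²/2}`. On the polynomial factor, `B'` acts as `p ↦ 2sXp - T_σ p`, where
`T_σ` is the Dunkl operator on `ℝ[X]`. The commutator `[T_σ, X] = 1 + 2σR`, with `R p = p(-X)`,
together with the parity `R p_k = (-1)^k p_k`, gives the lowering relation
`T_σ p_k = √(2[k]_σ s) p_{k-1}`, where `[k]_σ` is `k` or `k + 2σ` according to the parity of `k`.
Hence the three-term recurrence `√(2[k+2]_σ s) p_{k+2} = 2sX p_{k+1} - √(2[k+1]_σ s) p_k`, which,
unrolled along the odd indices, expresses `p_{2n+1} / X` through `p_0, p_2, …, p_{2n}`.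
-/

open Polynomial

namespace Polynomial

/-- The Dunkl operator `T_σ` on `ℝ[X]`; `divX` divides exactly, as `p - p(-X)` vanishes at `0`. -/
noncomputable def dunkl (σ : ℝ) (p : ℝ[X]) : ℝ[X] := derivative p + C σ * divX (p - p.comp (-X))

variable (σ : ℝ)

theorem X_mul_dunkl (p : ℝ[X]) :
    X * dunkl σ p = X * derivative p + C σ * (p - p.comp (-X)) := by
  have hdiv := X_mul_divX_add (p - p.comp (-X))
  rw [show (p - p.comp (-X)).coeff 0 = 0 by simp [coeff_zero_eq_eval_zero, eval_comp],
    C_0, add_zero] at hdiv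
  rw [dunkl, mul_add, mul_left_comm, hdiv]

theorem dunkl_eq_of_X_mul {p r : ℝ[X]}
    (h : X * r = X * derivative p + C σ * (p - p.comp (-X))) : dunkl σ p = r :=
  mul_left_cancel₀ X_ne_zero ((X_mul_dunkl σ p).trans h.symm)

theorem dunkl_sub (p q : ℝ[X]) : dunkl σ (p - q) = dunkl σ p - dunkl σ q :=
  dunkl_eq_of_X_mul σ (by rw [mul_sub, X_mul_dunkl, X_mul_dunkl, derivative_sub, sub_comp]; ring)

theorem dunkl_C_mul (a : ℝ) (p : ℝ[X]) : dunkl σ (C a * p) = C a * dunkl σ p :=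
  dunkl_eq_of_X_mul σ (by
    rw [mul_left_comm, X_mul_dunkl, derivative_C_mul, mul_comp, C_comp]; ring)

theorem dunkl_C (a : ℝ) : dunkl σ (C a) = 0 :=
  dunkl_eq_of_X_mul σ (by simp)

theorem dunkl_X_mul (p : ℝ[X]) :
    dunkl σ (X * p) = X * dunkl σ p + p + C (2 * σ) * p.comp (-X) :=
  dunkl_eq_of_X_mul σ (by
    rw [mul_add, mul_add, X_mul_dunkl, derivative_mul, derivative_X, mul_comp, X_comp, C_mul,
      C_ofNat]
    ring)

theorem dunkl_comp_neg_X (p : ℝ[X]) : dunkl σ (p.comp (-X)) = -(dunkl σ p).comp (-X) := by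
  apply dunkl_eq_of_X_mul
  have h := congrArg (fun q => q.comp (-X)) (X_mul_dunkl σ p)
  simp only [mul_comp, X_comp, add_comp, sub_comp, C_comp, comp_neg_X_comp_neg_X] at h
  rw [derivative_comp, derivative_neg, derivative_X, comp_neg_X_comp_neg_X]
  linear_combination h

theorem eval_dunkl {x : ℝ} (hx : x ≠ 0) (p : ℝ[X]) :
    (dunkl σ p).eval x = (derivative p).eval x + σ * (p.eval x - p.eval (-x)) / x := by
  have h := congrArg (eval x) (X_mul_dunkl σ p)
  simp only [eval_mul, eval_X, eval_add, eval_C, eval_sub, eval_comp, eval_neg] at h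
  field_simp
  linear_combination h

end Polynomial

noncomputable def dunklWeight (σ : ℝ) (k : ℕ) : ℝ := if Even k then k else k + 2 * σ

noncomputable def ladderCoeff (σ s : ℝ) (k : ℕ) : ℝ := √(2 * dunklWeight σ k * s)

section Weights

variable {σ s : ℝ}

theorem dunklWeight_zero (σ : ℝ) : dunklWeight σ 0 = 0 := by simp [dunklWeight]

theorem dunklWeight_two_mul (σ : ℝ) (q : ℕ) : dunklWeight σ (2 * q) = 2 * q := by
  simp [dunklWeight]

theorem dunklWeight_two_mul_add_one (σ : ℝ) (q : ℕ) :
    dunklWeight σ (2 * q + 1) = 2 * q + 1 + 2 * σ := by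
  simp [dunklWeight]

theorem dunklWeight_succ (σ : ℝ) (k : ℕ) :
    dunklWeight σ (k + 1) = dunklWeight σ k + 1 + 2 * σ * (-1) ^ k := by
  rcases Nat.even_or_odd k with hk | hk
  · simp [dunklWeight, hk, hk.neg_one_pow]
  · simp [dunklWeight, hk, hk.neg_one_pow, Nat.not_even_iff_odd.mpr]
    ring

theorem dunklWeight_pos (hσ : -(1 / 2) < σ) {k : ℕ} (hk : k ≠ 0) : 0 < dunklWeight σ k := by
  have : (1 : ℝ) ≤ k := by exact_mod_cast Nat.one_le_iff_ne_zero.mpr hk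
  unfold dunklWeight; split_ifs <;> linarith

theorem dunklWeight_nonneg (hσ : -(1 / 2) < σ) (k : ℕ) : 0 ≤ dunklWeight σ k := by
  rcases eq_or_ne k 0 with rfl | hk
  · rw [dunklWeight_zero]
  · exact (dunklWeight_pos hσ hk).le

theorem ladderCoeff_zero (σ s : ℝ) : ladderCoeff σ s 0 = 0 := by
  simp [ladderCoeff, dunklWeight_zero]

theorem ladderCoeff_pos (hσ : -(1 / 2) < σ) (hs : 0 < s) {k : ℕ} (hk : k ≠ 0) :
    0 < ladderCoeff σ s k :=
  Real.sqrt_pos.mpr (by have := dunklWeight_pos hσ hk; positivity)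

theorem ladderCoeff_sq (hσ : -(1 / 2) < σ) (hs : 0 ≤ s) (k : ℕ) :
    ladderCoeff σ s k ^ 2 = 2 * dunklWeight σ k * s :=
  Real.sq_sqrt (by have := dunklWeight_nonneg hσ k; positivity)

theorem inv_ladderCoeff_mul_ladderCoeff (hσ : -(1 / 2) < σ) (hs : 0 < s) (k l : ℕ) :
    (ladderCoeff σ s k)⁻¹ * ladderCoeff σ s l = √(dunklWeight σ l / dunklWeight σ k) := by
  rw [ladderCoeff, ladderCoeff, inv_mul_eq_div,
    ← Real.sqrt_div' _ (by have := dunklWeight_nonneg hσ k; positivity),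
    mul_div_mul_right _ _ hs.ne', mul_div_mul_left _ _ two_ne_zero]

end Weights

noncomputable def dunklRaise (σ s : ℝ) (p : ℝ[X]) : ℝ[X] := C (2 * s) * X * p - dunkl σ p

noncomputable def dunklHermite (σ s : ℝ) : ℕ → ℝ[X]
  | 0 => C (s ^ ((2 * σ + 1) / 4) * Real.Gamma (σ + 1 / 2) ^ (-(1 / 2) : ℝ))
  | k + 1 => C (ladderCoeff σ s (k + 1))⁻¹ * dunklRaise σ s (dunklHermite σ s k)

section DunklHermite

variable {σ s : ℝ}

theorem dunklHermite_comp_neg_X (k : ℕ) :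
    (dunklHermite σ s k).comp (-X) = C ((-1) ^ k) * dunklHermite σ s k := by
  induction k with
  | zero => simp [dunklHermite]
  | succ k ih =>
    have hT : (dunkl σ (dunklHermite σ s k)).comp (-X) =
        -(C ((-1) ^ k) * dunkl σ (dunklHermite σ s k)) := by
      rw [← dunkl_C_mul, ← ih, dunkl_comp_neg_X, neg_neg]
    simp only [dunklHermite, dunklRaise, mul_comp, sub_comp, C_comp, X_comp, ih, hT, pow_succ,
      C_mul, C_neg, C_1]
    ring

theorem C_ladderCoeff_mul_dunklRaise (hσ : -(1 / 2) < σ) (hs : 0 < s) (k : ℕ) :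
    C (ladderCoeff σ s k) * dunklRaise σ s (dunklHermite σ s (k - 1)) =
      C (ladderCoeff σ s k ^ 2) * dunklHermite σ s k := by
  cases k with
  | zero => simp [ladderCoeff_zero]
  | succ k =>
    have hne := (ladderCoeff_pos hσ hs k.succ_ne_zero).ne'
    rw [dunklHermite, Nat.add_sub_cancel, ← mul_assoc, ← C_mul, sq, mul_assoc,
      mul_inv_cancel₀ hne, mul_one]

/-- The commutator `[T_σ, X]` contributes `2s(1 + 2σ(-1)^k)`, which is exactly the step from
`2[k]_σ s` to `2[k+1]_σ s`. -/
theorem dunkl_dunklHermite (hσ : -(1 / 2) < σ) (hs : 0 < s) (k : ℕ) :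
    dunkl σ (dunklHermite σ s k) = C (ladderCoeff σ s k) * dunklHermite σ s (k - 1) := by
  induction k with
  | zero => rw [dunklHermite, dunkl_C, ladderCoeff_zero, C_0, zero_mul]
  | succ k ih =>
    set ε : ℝ := (-1) ^ k
    have hscalar : (ladderCoeff σ s (k + 1))⁻¹ * (ladderCoeff σ s k ^ 2 + 2 * s * (1 + 2 * σ * ε))
        = ladderCoeff σ s (k + 1) := by
      have hne := (ladderCoeff_pos hσ hs k.succ_ne_zero).ne'
      rw [show ladderCoeff σ s k ^ 2 + 2 * s * (1 + 2 * σ * ε) = ladderCoeff σ s (k + 1) ^ 2 by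
        rw [ladderCoeff_sq hσ hs.le, ladderCoeff_sq hσ hs.le, dunklWeight_succ]; ring]
      field_simp
    calc dunkl σ (dunklHermite σ s (k + 1))
        = C (ladderCoeff σ s (k + 1))⁻¹ * (C (ladderCoeff σ s k) *
            dunklRaise σ s (dunklHermite σ s (k - 1)) +
              C (2 * s * (1 + 2 * σ * ε)) * dunklHermite σ s k) := by
          rw [dunklHermite, dunkl_C_mul, dunklRaise, dunkl_sub, mul_assoc, dunkl_C_mul,
            dunkl_X_mul, ih, dunkl_C_mul, dunklHermite_comp_neg_X, dunklRaise]
          simp only [C_mul, C_add, C_1]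
          ring
      _ = C ((ladderCoeff σ s (k + 1))⁻¹ * (ladderCoeff σ s k ^ 2 + 2 * s * (1 + 2 * σ * ε))) *
            dunklHermite σ s k := by
          rw [C_ladderCoeff_mul_dunklRaise hσ hs]
          simp only [C_mul, C_add]
          ring
      _ = _ := by rw [hscalar, Nat.add_sub_cancel]

theorem dunklHermite_add_two (hσ : -(1 / 2) < σ) (hs : 0 < s) (k : ℕ) :
    dunklHermite σ s (k + 2) = C (ladderCoeff σ s (k + 2))⁻¹ *
      (C (2 * s) * X * dunklHermite σ s (k + 1) -
        C (ladderCoeff σ s (k + 1)) * dunklHermite σ s k) := by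
  rw [dunklHermite, dunklRaise, dunkl_dunklHermite hσ hs, Nat.add_sub_cancel]

end DunklHermite

theorem Bop'_eq_eval_dunklRaise_mul_exp {σ s : ℝ} {f : ℝ → ℝ} {p : ℝ[X]}
    (hf : ∀ y ≠ 0, f y = p.eval y * rexp (-s * y ^ 2 / 2)) {x : ℝ} (hx : x ≠ 0) :
    Bop' σ s f x = (dunklRaise σ s p).eval x * rexp (-s * x ^ 2 / 2) := by
  have hgauss :
      HasDerivAt (fun y => rexp (-s * y ^ 2 / 2)) (-s * x * rexp (-s * x ^ 2 / 2)) x := by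
    convert (((hasDerivAt_pow 2 x).const_mul (-s)).div_const 2).exp using 1
    push_cast
    ring
  have hderiv : deriv f x = (derivative p).eval x * rexp (-s * x ^ 2 / 2) +
      p.eval x * (-s * x * rexp (-s * x ^ 2 / 2)) := by
    have hfx : f =ᶠ[nhds x] fun y => p.eval y * rexp (-s * y ^ 2 / 2) :=
      Filter.eventually_of_mem (isOpen_ne.mem_nhds hx) hf
    rw [hfx.deriv_eq]
    exact ((p.hasDerivAt x).mul hgauss).deriv
  have hodd : invX (oddPart f) x =
      (p.eval x - p.eval (-x)) / (2 * x) * rexp (-s * x ^ 2 / 2) := by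
    simp only [invX, if_neg hx, oddPart, hf x hx, hf (-x) (neg_ne_zero.mpr hx), neg_sq]
    ring
  simp only [Bop', dunklT, hderiv, hodd, hf x hx, dunklRaise, eval_sub, eval_mul, eval_C, eval_X,
    eval_dunkl σ hx]
  field_simp
  ring

theorem hermiteFn_succ (σ s : ℝ) (k : ℕ) (x : ℝ) :
    hermiteFn σ s (k + 1) x =
      (2 * dunklWeight σ (k + 1) * s) ^ (-(1 / 2) : ℝ) * Bop' σ s (hermiteFn σ s k) x := by
  rw [hermiteFn, dunklWeight]
  split_ifs <;> push_cast <;> ring_nf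

theorem hermiteFn_eq_eval_mul_exp {σ s : ℝ} (hσ : -(1 / 2) < σ) (hs : 0 ≤ s) (k : ℕ) {x : ℝ}
    (hx : x ≠ 0) : hermiteFn σ s k x = (dunklHermite σ s k).eval x * rexp (-s * x ^ 2 / 2) := by
  induction k generalizing x with
  | zero => simp [hermiteFn, dunklHermite]
  | succ k ih =>
    rw [hermiteFn_succ, Bop'_eq_eval_dunklRaise_mul_exp (fun y hy => ih hy) hx, dunklHermite,
      eval_mul, eval_C, ladderCoeff, Real.sqrt_eq_rpow,
      ← Real.rpow_neg (by have := dunklWeight_nonneg hσ (k + 1); positivity)]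
    ring

theorem genHermitePoly_eq_eval {σ s : ℝ} (hσ : -(1 / 2) < σ) (hs : 0 ≤ s) (k : ℕ) {x : ℝ}
    (hx : x ≠ 0) : genHermitePoly σ s k x = (dunklHermite σ s k).eval x := by
  rw [genHermitePoly, hermiteFn_eq_eval_mul_exp hσ hs k hx, mul_assoc, ← Real.exp_add]
  ring_nf
  rw [Real.exp_zero, mul_one]

/-- The coefficient of `p_{2j}` in `p_{2(j+m)+1} / X`. -/
noncomputable def oddCoeff (σ s : ℝ) (j m : ℕ) : ℝ :=
  (-1) ^ m * √((2 * s * ∏ i ∈ Finset.range m, (2 * (j : ℝ) + 2 + 2 * i)) /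
    ∏ i ∈ Finset.range (m + 1), (2 * (j : ℝ) + 1 + 2 * i + 2 * σ))

section OddCoeff

variable {σ s : ℝ}

theorem oddCoeff_zero (hσ : -(1 / 2) < σ) (hs : 0 < s) (j : ℕ) :
    oddCoeff σ s j 0 = (ladderCoeff σ s (2 * j + 1))⁻¹ * (2 * s) := by
  have hw : 0 < 2 * (j : ℝ) + 1 + 2 * σ := by have := j.cast_nonneg (α := ℝ); linarith
  have hw' : 0 < 2 * (2 * (j : ℝ) + 1 + 2 * σ) * s := by positivity
  rw [oddCoeff, ladderCoeff, dunklWeight_two_mul_add_one, eq_inv_mul_iff_mul_eq₀ (by positivity)]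
  simp only [pow_zero, one_mul, Finset.prod_range_zero, zero_add, Finset.prod_range_one,
    CharP.cast_eq_zero, mul_one, mul_zero, add_zero]
  rw [← Real.sqrt_mul hw'.le,
    show 2 * (2 * (j : ℝ) + 1 + 2 * σ) * s * (2 * s / (2 * j + 1 + 2 * σ)) = (2 * s) ^ 2 by
      field_simp,
    Real.sqrt_sq (by positivity)]

theorem oddCoeff_succ (hσ : -(1 / 2) < σ) (hs : 0 < s) (j m : ℕ) :
    oddCoeff σ s j (m + 1) =
      -((ladderCoeff σ s (2 * (j + m) + 3))⁻¹ * ladderCoeff σ s (2 * (j + m) + 2)) *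
        oddCoeff σ s j m := by
  have hB : 0 ≤ ∏ i ∈ Finset.range (m + 1), (2 * (j : ℝ) + 1 + 2 * i + 2 * σ) :=
    Finset.prod_nonneg fun i _ => by
      have := i.cast_nonneg (α := ℝ); have := j.cast_nonneg (α := ℝ); linarith
  have hsA : 0 ≤ 2 * s * ∏ i ∈ Finset.range m, (2 * (j : ℝ) + 2 + 2 * i) := by positivity
  have huv : (2 * (j : ℝ) + 2 + 2 * m) / (2 * j + 1 + 2 * ((m + 1 : ℕ) : ℝ) + 2 * σ) =
      2 * ((j + m + 1 : ℕ) : ℝ) / (2 * ((j + m + 1 : ℕ) : ℝ) + 1 + 2 * σ) := by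
    push_cast; ring_nf
  rw [inv_ladderCoeff_mul_ladderCoeff hσ hs, show 2 * (j + m) + 3 = 2 * (j + m + 1) + 1 by ring,
    show 2 * (j + m) + 2 = 2 * (j + m + 1) by ring, dunklWeight_two_mul,
    dunklWeight_two_mul_add_one, oddCoeff, oddCoeff, Finset.prod_range_succ,
    Finset.prod_range_succ _ (m + 1), ← mul_assoc, mul_div_mul_comm,
    Real.sqrt_mul (div_nonneg hsA hB), huv]
  ring

theorem dunklHermite_two_mul_add_one (hσ : -(1 / 2) < σ) (hs : 0 < s) (n : ℕ) :
    dunklHermite σ s (2 * n + 1) =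
      X * ∑ j ∈ Finset.range (n + 1), C (oddCoeff σ s j (n - j)) * dunklHermite σ s (2 * j) := by
  induction n with
  | zero =>
    rw [dunklHermite, dunklRaise, dunkl_dunklHermite hσ hs, Finset.sum_range_one,
      oddCoeff_zero hσ hs]
    simp only [mul_zero, ladderCoeff_zero, C_0, zero_mul, sub_zero, C_mul]
    ring
  | succ n ih =>
    have hsum : ∑ j ∈ Finset.range (n + 1),
          C (oddCoeff σ s j (n + 1 - j)) * dunklHermite σ s (2 * j) =
        C (-((ladderCoeff σ s (2 * (n + 1) + 1))⁻¹ * ladderCoeff σ s (2 * (n + 1)))) *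
          ∑ j ∈ Finset.range (n + 1), C (oddCoeff σ s j (n - j)) * dunklHermite σ s (2 * j) := by
      rw [Finset.mul_sum]
      refine Finset.sum_congr rfl fun j hj => ?_
      have hjn : j ≤ n := Nat.lt_succ_iff.mp (Finset.mem_range.mp hj)
      rw [Nat.succ_sub hjn, oddCoeff_succ hσ hs, Nat.add_sub_cancel' hjn, C_mul, mul_assoc,
        show 2 * n + 3 = 2 * (n + 1) + 1 by ring, show 2 * n + 2 = 2 * (n + 1) by ring]
    rw [show 2 * (n + 1) + 1 = 2 * n + 1 + 2 by ring, dunklHermite_add_two hσ hs, ih,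
      Finset.sum_range_succ _ (n + 1), hsum, Nat.sub_self, oddCoeff_zero hσ hs,
      show 2 * n + 1 + 2 = 2 * (n + 1) + 1 by ring, show 2 * n + 1 + 1 = 2 * (n + 1) by ring]
    simp only [C_mul, C_neg]
    ring

end OddCoeff

theorem genHermitePoly_odd_div_x (σ s : ℝ) (hσ : -(1/2) < σ) (hs : 0 < s)
    (k : ℕ) (hk : Odd k) (x : ℝ) (hx : x ≠ 0) :
    genHermitePoly σ s k x / x =
      ∑ j ∈ Finset.range ((k + 1) / 2),
        (-1 : ℝ) ^ ((k - 2 * j - 1) / 2) *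
          Real.sqrt
            ((2 * s * ∏ i ∈ Finset.range ((k - 2 * j - 1) / 2), (2 * (j : ℝ) + 2 + 2 * i)) /
              (∏ i ∈ Finset.range ((k - 2 * j - 1) / 2 + 1), (2 * (j : ℝ) + 1 + 2 * i + 2 * σ))) *
          genHermitePoly σ s (2 * j) x := by
  obtain ⟨n, rfl⟩ := hk
  rw [genHermitePoly_eq_eval hσ hs.le _ hx, dunklHermite_two_mul_add_one hσ hs, eval_mul, eval_X,
    mul_div_cancel_left₀ _ hx, eval_finsetSum, show (2 * n + 1 + 1) / 2 = n + 1 by omega]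
  refine Finset.sum_congr rfl fun j _ => ?_
  rw [eval_mul, eval_C, genHermitePoly_eq_eval hσ hs.le _ hx, oddCoeff,
    show (2 * n + 1 - 2 * j - 1) / 2 = n - j by omega]
end

section
/- Let σ > −1/2 and s > 0. For every k ∈ ℕ, the generalized Hermite function φ_k satisfies L_σ φ_k = (2k+1+2σ)s · φ_k, where L_σ is the Dunkl harmonic oscillator. -/
open MeasureTheory Real

/-!
Write `evenGauss s A` for `A(x²)·e^{-sx²/2}` and `oddGauss s B` for `x·B(x²)·e^{-sx²/2}`. On
these even and odd functions `T_σ` and `B'` swap parity and act on the polynomials `A`, `B` by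
explicit first-order operators, and `L_σ` preserves parity. In these terms the commutation relation
`[L_σ, B'] = 2s·B'` becomes a polynomial identity. Since `φ₀` is a multiple of `e^{-sx²/2}`, with
eigenvalue `(1 + 2σ)s`, and each `φ_{k+1}` is a multiple of `B'φ_k`, the eigenvalue increases by
`2s` at each step.
-/

open Polynomial

noncomputable section

def evenGauss (s : ℝ) : ℝ[X] →ₗ[ℝ] ℝ → ℝ where
  toFun A x := A.eval (x ^ 2) * exp (-s * x ^ 2 / 2)
  map_add' A B := by ext x; simp [add_mul]
  map_smul' c A := by ext x; simp [mul_assoc]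

def oddGauss (s : ℝ) : ℝ[X] →ₗ[ℝ] ℝ → ℝ where
  toFun B x := x * B.eval (x ^ 2) * exp (-s * x ^ 2 / 2)
  map_add' A B := by ext x; simp only [eval_add, Pi.add_apply]; ring
  map_smul' c A := by
    ext x
    simp only [eval_smul, smul_eq_mul, RingHom.id_apply, Pi.smul_apply]
    ring

lemma evenGauss_apply (s : ℝ) (A : ℝ[X]) (x : ℝ) :
    evenGauss s A x = A.eval (x ^ 2) * exp (-s * x ^ 2 / 2) := rfl

lemma oddGauss_apply (s : ℝ) (B : ℝ[X]) (x : ℝ) :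
    oddGauss s B x = x * B.eval (x ^ 2) * exp (-s * x ^ 2 / 2) := rfl

def dunklPolyEven (s : ℝ) (A : ℝ[X]) : ℝ[X] := 2 * derivative A - C s * A

def dunklPolyOdd (σ s : ℝ) (B : ℝ[X]) : ℝ[X] :=
  C (1 + 2 * σ) * B + 2 * X * derivative B - C s * X * B

def oscPolyEven (σ s : ℝ) (A : ℝ[X]) : ℝ[X] :=
  C (s ^ 2) * X * A - dunklPolyOdd σ s (dunklPolyEven s A)

def oscPolyOdd (σ s : ℝ) (B : ℝ[X]) : ℝ[X] :=
  C (s ^ 2) * X * B - dunklPolyEven s (dunklPolyOdd σ s B)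

def creationPolyEven (s : ℝ) (A : ℝ[X]) : ℝ[X] := C s * A - dunklPolyEven s A

def creationPolyOdd (σ s : ℝ) (B : ℝ[X]) : ℝ[X] := C s * X * B - dunklPolyOdd σ s B

lemma oscPolyOdd_creationPolyEven (σ s : ℝ) (A : ℝ[X]) :
    oscPolyOdd σ s (creationPolyEven s A) =
      creationPolyEven s (oscPolyEven σ s A) + (2 * s) • creationPolyEven s A := by
  simp only [oscPolyOdd, oscPolyEven, creationPolyEven, dunklPolyEven, dunklPolyOdd,
    derivative_mul, derivative_add, derivative_sub, derivative_C, derivative_X, derivative_ofNat,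
    derivative_zero]
  simp only [smul_eq_C_mul, map_add, map_mul, map_pow, map_ofNat, map_one]
  ring

lemma oscPolyEven_creationPolyOdd (σ s : ℝ) (B : ℝ[X]) :
    oscPolyEven σ s (creationPolyOdd σ s B) =
      creationPolyOdd σ s (oscPolyOdd σ s B) + (2 * s) • creationPolyOdd σ s B := by
  simp only [oscPolyOdd, oscPolyEven, creationPolyOdd, dunklPolyEven, dunklPolyOdd,
    derivative_mul, derivative_add, derivative_sub, derivative_C, derivative_X, derivative_ofNat,
    derivative_zero, derivative_one]
  simp only [smul_eq_C_mul, map_add, map_mul, map_pow, map_ofNat, map_one]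
  ring

lemma oscPolyEven_C (σ s c : ℝ) : oscPolyEven σ s (C c) = ((1 + 2 * σ) * s) • C c := by
  simp only [oscPolyEven, dunklPolyEven, dunklPolyOdd, derivative_mul, derivative_sub,
    derivative_C, derivative_ofNat, derivative_zero]
  simp only [smul_eq_C_mul, map_add, map_mul, map_pow, map_ofNat, map_one]
  ring

lemma hasDerivAt_exp_neg_mul_sq_div_two (s x : ℝ) :
    HasDerivAt (fun x => exp (-s * x ^ 2 / 2)) (-(s * x) * exp (-s * x ^ 2 / 2)) x := by
  refine (((hasDerivAt_pow 2 x).const_mul (-s)).div_const 2).exp.congr_deriv ?_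
  ring

lemma Polynomial.hasDerivAt_eval_sq (A : ℝ[X]) (x : ℝ) :
    HasDerivAt (fun x => A.eval (x ^ 2)) (2 * x * A.derivative.eval (x ^ 2)) x := by
  refine ((A.hasDerivAt (x ^ 2)).comp x (hasDerivAt_pow 2 x)).congr_deriv ?_
  ring

lemma hasDerivAt_evenGauss (s : ℝ) (A : ℝ[X]) (x : ℝ) :
    HasDerivAt (evenGauss s A) (oddGauss s (dunklPolyEven s A) x) x := by
  refine ((A.hasDerivAt_eval_sq x).mul (hasDerivAt_exp_neg_mul_sq_div_two s x)).congr_deriv ?_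
  simp only [oddGauss_apply, dunklPolyEven, eval_sub, eval_mul, eval_ofNat, eval_C]
  ring

-- `dunklPolyOdd 0 s` is the ordinary derivative; the `2σ·x⁻¹` term of `T_σ` adds `C (2σ) * B`.
lemma hasDerivAt_oddGauss (s : ℝ) (B : ℝ[X]) (x : ℝ) :
    HasDerivAt (oddGauss s B) (evenGauss s (dunklPolyOdd 0 s B) x) x := by
  refine (((hasDerivAt_id' x).mul (B.hasDerivAt_eval_sq x)).mul
    (hasDerivAt_exp_neg_mul_sq_div_two s x)).congr_deriv ?_
  simp only [evenGauss_apply, dunklPolyOdd, Pi.mul_apply, eval_add, eval_sub, eval_mul, eval_ofNat,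
    eval_X, eval_C]
  ring

lemma oddPart_evenGauss (s : ℝ) (A : ℝ[X]) : oddPart (evenGauss s A) = 0 := by
  ext x
  simp [oddPart, evenGauss_apply]

lemma oddPart_oddGauss (s : ℝ) (B : ℝ[X]) : oddPart (oddGauss s B) = oddGauss s B := by
  ext x
  simp only [oddPart, oddGauss_apply, neg_sq]
  ring

lemma invX_zero : invX 0 = 0 := by
  ext x
  simp [invX]

lemma invX_oddGauss (s : ℝ) (B : ℝ[X]) : invX (oddGauss s B) = evenGauss s B := by
  ext x
  rw [invX]
  split_ifs with hx
  · subst hx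
    simp [(hasDerivAt_oddGauss s B 0).deriv, evenGauss_apply, dunklPolyOdd]
  · rw [oddGauss_apply, evenGauss_apply]
    field_simp

lemma dunklT_evenGauss (σ s : ℝ) (A : ℝ[X]) :
    dunklT σ (evenGauss s A) = oddGauss s (dunklPolyEven s A) := by
  ext x
  simp [dunklT, oddPart_evenGauss, invX_zero, (hasDerivAt_evenGauss s A x).deriv]

lemma dunklT_oddGauss (σ s : ℝ) (B : ℝ[X]) :
    dunklT σ (oddGauss s B) = evenGauss s (dunklPolyOdd σ s B) := by
  ext x
  rw [dunklT, oddPart_oddGauss, invX_oddGauss, (hasDerivAt_oddGauss s B x).deriv]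
  simp only [evenGauss_apply, dunklPolyOdd, eval_add, eval_sub, eval_mul, eval_C, eval_X]
  ring

lemma Bop'_evenGauss (σ s : ℝ) (A : ℝ[X]) :
    Bop' σ s (evenGauss s A) = oddGauss s (creationPolyEven s A) := by
  ext x
  rw [Bop', dunklT_evenGauss]
  simp only [evenGauss_apply, oddGauss_apply, creationPolyEven, eval_sub, eval_mul, eval_C]
  ring

lemma Bop'_oddGauss (σ s : ℝ) (B : ℝ[X]) :
    Bop' σ s (oddGauss s B) = evenGauss s (creationPolyOdd σ s B) := by
  ext x
  rw [Bop', dunklT_oddGauss]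
  simp only [evenGauss_apply, oddGauss_apply, creationPolyOdd, eval_sub, eval_mul, eval_C, eval_X]
  ring

lemma dunklL_evenGauss (σ s : ℝ) (A : ℝ[X]) :
    dunklL σ s (evenGauss s A) = evenGauss s (oscPolyEven σ s A) := by
  ext x
  rw [dunklL, dunklT_evenGauss, dunklT_oddGauss]
  simp only [evenGauss_apply, oscPolyEven, eval_sub, eval_mul, eval_C, eval_X]
  ring

lemma dunklL_oddGauss (σ s : ℝ) (B : ℝ[X]) :
    dunklL σ s (oddGauss s B) = oddGauss s (oscPolyOdd σ s B) := by
  ext x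
  rw [dunklL, dunklT_oddGauss, dunklT_evenGauss]
  simp only [oddGauss_apply, oscPolyOdd, eval_sub, eval_mul, eval_C, eval_X]
  ring

lemma oddPart_const_smul (c : ℝ) (φ : ℝ → ℝ) : oddPart (c • φ) = c • oddPart φ := by
  ext x
  simp only [oddPart, Pi.smul_apply, smul_eq_mul]
  ring

lemma invX_const_smul (c : ℝ) (ψ : ℝ → ℝ) : invX (c • ψ) = c • invX ψ := by
  ext x
  simp only [invX, Pi.smul_apply, smul_eq_mul]
  split_ifs
  · exact deriv_const_mul_field c
  · exact mul_div_assoc c (ψ x) x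

lemma dunklT_const_smul (σ c : ℝ) (φ : ℝ → ℝ) : dunklT σ (c • φ) = c • dunklT σ φ := by
  ext x
  have hderiv : deriv (c • φ) x = c * deriv φ x := deriv_const_mul_field c
  simp only [dunklT, hderiv, oddPart_const_smul, invX_const_smul, Pi.smul_apply, smul_eq_mul]
  ring

lemma Bop'_const_smul (σ s c : ℝ) (φ : ℝ → ℝ) : Bop' σ s (c • φ) = c • Bop' σ s φ := by
  ext x
  simp only [Bop', dunklT_const_smul, Pi.smul_apply, smul_eq_mul]
  ring

lemma dunklL_const_smul (σ s c : ℝ) (φ : ℝ → ℝ) : dunklL σ s (c • φ) = c • dunklL σ s φ := by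
  ext x
  simp only [dunklL, dunklT_const_smul, Pi.smul_apply, smul_eq_mul]
  ring

def IsEvenOrOddPolyGaussian (s : ℝ) (f : ℝ → ℝ) : Prop :=
  (∃ A, f = evenGauss s A) ∨ ∃ B, f = oddGauss s B

namespace IsEvenOrOddPolyGaussian

variable {s : ℝ} {f : ℝ → ℝ}

lemma const_smul (hf : IsEvenOrOddPolyGaussian s f) (c : ℝ) :
    IsEvenOrOddPolyGaussian s (c • f) := by
  rcases hf with ⟨A, rfl⟩ | ⟨B, rfl⟩
  · exact .inl ⟨c • A, (map_smul _ c A).symm⟩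
  · exact .inr ⟨c • B, (map_smul _ c B).symm⟩

lemma dunklL_Bop' (hf : IsEvenOrOddPolyGaussian s f) (σ : ℝ) :
    dunklL σ s (Bop' σ s f) = Bop' σ s (dunklL σ s f) + (2 * s) • Bop' σ s f := by
  rcases hf with ⟨A, rfl⟩ | ⟨B, rfl⟩
  · rw [Bop'_evenGauss, dunklL_oddGauss, oscPolyOdd_creationPolyEven, dunklL_evenGauss,
      Bop'_evenGauss, map_add, map_smul]
  · rw [Bop'_oddGauss, dunklL_evenGauss, oscPolyEven_creationPolyOdd, dunklL_oddGauss,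
      Bop'_oddGauss, map_add, map_smul]

lemma Bop' (hf : IsEvenOrOddPolyGaussian s f) (σ : ℝ) :
    IsEvenOrOddPolyGaussian s (Bop' σ s f) := by
  rcases hf with ⟨A, rfl⟩ | ⟨B, rfl⟩
  · exact .inr ⟨_, Bop'_evenGauss σ s A⟩
  · exact .inl ⟨_, Bop'_oddGauss σ s B⟩

end IsEvenOrOddPolyGaussian

lemma exists_hermiteFn_zero_eq (σ s : ℝ) : ∃ c, hermiteFn σ s 0 = evenGauss s (C c) :=
  ⟨s ^ ((2 * σ + 1) / 4) * Gamma (σ + 1 / 2) ^ (-(1 / 2) : ℝ), by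
    ext x; simp [hermiteFn, evenGauss_apply]⟩

lemma exists_hermiteFn_succ_eq (σ s : ℝ) (k : ℕ) :
    ∃ c : ℝ, hermiteFn σ s (k + 1) = c • Bop' σ s (hermiteFn σ s k) := by
  rw [hermiteFn]
  split_ifs
  exacts [⟨_, rfl⟩, ⟨_, rfl⟩]

lemma isEvenOrOddPolyGaussian_hermiteFn (σ s : ℝ) (k : ℕ) :
    IsEvenOrOddPolyGaussian s (hermiteFn σ s k) := by
  induction k with
  | zero =>
    obtain ⟨c, hc⟩ := exists_hermiteFn_zero_eq σ s
    exact .inl ⟨_, hc⟩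
  | succ k ih =>
    obtain ⟨c, hc⟩ := exists_hermiteFn_succ_eq σ s k
    exact hc ▸ (ih.Bop' σ).const_smul c

lemma dunklL_hermiteFn (σ s : ℝ) (k : ℕ) :
    dunklL σ s (hermiteFn σ s k) = ((2 * k + 1 + 2 * σ) * s) • hermiteFn σ s k := by
  induction k with
  | zero =>
    obtain ⟨c, hc⟩ := exists_hermiteFn_zero_eq σ s
    rw [hc, dunklL_evenGauss, oscPolyEven_C, map_smul]
    norm_num
  | succ k ih =>
    obtain ⟨c, hc⟩ := exists_hermiteFn_succ_eq σ s k
    rw [hc, dunklL_const_smul, (isEvenOrOddPolyGaussian_hermiteFn σ s k).dunklL_Bop', ih,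
      Bop'_const_smul]
    push_cast
    module

end

theorem hermiteFn_is_eigenfunction_general (σ s : ℝ) (k : ℕ) :
    ∀ x : ℝ, dunklL σ s (hermiteFn σ s k) x = (2 * (k : ℝ) + 1 + 2 * σ) * s * hermiteFn σ s k x := by
  intro x
  rw [dunklL_hermiteFn]
  rfl

theorem hermiteFn_is_eigenfunction (σ s : ℝ) (hσ : -(1/2) < σ) (hs : 0 < s) (k : ℕ) :
    ∀ x : ℝ, dunklL σ s (hermiteFn σ s k) x = (2 * (k : ℝ) + 1 + 2 * σ) * s * hermiteFn σ s k x :=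
  hermiteFn_is_eigenfunction_general σ s k
end

section
/- For each n ∈ ℕ there exist finite families of real numbers c_{a,b}, d_{k,ℓ}, e_{u,v}, indexed by natural numbers a, b, k, ℓ, u, v running in finite subsets of ℕ with b, ℓ, v ≤ M_n := 1 + n(n+1)/2 and k ≥ n, such that for every smooth function φ : ℝ → ℝ and every x ∈ ℝ: φ(x) = Σ_{a,b} c_{a,b}·x^a·φ^{(b)}(1) + Σ_{k,ℓ} d_{k,ℓ}·x^k·φ^{(ℓ)}(x) + Σ_{u,v} e_{u,v}·x^u·∫_x^1 t^n φ^{(v)}(t) dt. -/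
open MeasureTheory Real

section TaylorLikeAux

open intervalIntegral

private def Mn (n : ℕ) : ℕ := 1 + n * (n + 1) / 2

private def RepP (n : ℕ) (F : (ℝ → ℝ) → ℝ → ℝ) : Prop :=
  ∃ (A D E : Finset (ℕ × ℕ)) (c d e : ℕ × ℕ → ℝ),
    (∀ p ∈ A, p.2 ≤ Mn n) ∧
    (∀ p ∈ D, p.2 ≤ Mn n ∧ n ≤ p.1) ∧
    (∀ p ∈ E, p.2 ≤ Mn n) ∧
    ∀ φ : ℝ → ℝ, ContDiff ℝ (⊤ : ℕ∞) φ → ∀ x : ℝ,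
      F φ x = (∑ p ∈ A, c p * x ^ p.1 * iteratedDeriv p.2 φ 1) +
        (∑ p ∈ D, d p * x ^ p.1 * iteratedDeriv p.2 φ x) +
        ∑ p ∈ E, e p * x ^ p.1 * ∫ t in x..(1 : ℝ), t ^ n * iteratedDeriv p.2 φ t

private lemma sum_union_ite (A₁ A₂ : Finset (ℕ × ℕ)) (c₁ c₂ f : ℕ × ℕ → ℝ) :
    ∑ p ∈ A₁ ∪ A₂, ((if p ∈ A₁ then c₁ p else 0) + if p ∈ A₂ then c₂ p else 0) * f p
      = ∑ p ∈ A₁, c₁ p * f p + ∑ p ∈ A₂, c₂ p * f p := by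
  simp only [add_mul, Finset.sum_add_distrib, ite_mul, zero_mul, Finset.sum_ite_mem,
    Finset.union_inter_cancel_left, Finset.union_inter_cancel_right]

private lemma RepP.congr {n : ℕ} {F G : (ℝ → ℝ) → ℝ → ℝ} (h : RepP n F)
    (hFG : ∀ φ : ℝ → ℝ, ContDiff ℝ (⊤ : ℕ∞) φ → ∀ x : ℝ, F φ x = G φ x) : RepP n G := by
  obtain ⟨A, D, E, c, d, e, hA, hD, hE, hid⟩ := h
  exact ⟨A, D, E, c, d, e, hA, hD, hE, fun φ hφ x => (hFG φ hφ x) ▸ hid φ hφ x⟩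

private lemma RepP.zero {n : ℕ} : RepP n (fun _ _ => 0) :=
  ⟨∅, ∅, ∅, 0, 0, 0, by simp, by simp, by simp, by simp⟩

private lemma RepP.add {n : ℕ} {F G : (ℝ → ℝ) → ℝ → ℝ} (hF : RepP n F) (hG : RepP n G) :
    RepP n (fun φ x => F φ x + G φ x) := by
  obtain ⟨A₁, D₁, E₁, c₁, d₁, e₁, hA₁, hD₁, hE₁, h₁⟩ := hF
  obtain ⟨A₂, D₂, E₂, c₂, d₂, e₂, hA₂, hD₂, hE₂, h₂⟩ := hG
  refine ⟨A₁ ∪ A₂, D₁ ∪ D₂, E₁ ∪ E₂,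
    (fun p => (if p ∈ A₁ then c₁ p else 0) + if p ∈ A₂ then c₂ p else 0),
    (fun p => (if p ∈ D₁ then d₁ p else 0) + if p ∈ D₂ then d₂ p else 0),
    (fun p => (if p ∈ E₁ then e₁ p else 0) + if p ∈ E₂ then e₂ p else 0), ?_, ?_, ?_, ?_⟩
  · intro p hp; rcases Finset.mem_union.1 hp with h | h
    exacts [hA₁ p h, hA₂ p h]
  · intro p hp; rcases Finset.mem_union.1 hp with h | h
    exacts [hD₁ p h, hD₂ p h]
  · intro p hp; rcases Finset.mem_union.1 hp with h | h
    exacts [hE₁ p h, hE₂ p h]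
  · intro φ hφ x
    dsimp only
    rw [h₁ φ hφ x, h₂ φ hφ x]
    simp only [mul_assoc]
    rw [sum_union_ite, sum_union_ite, sum_union_ite]
    ring

private lemma RepP.smul {n : ℕ} {F : (ℝ → ℝ) → ℝ → ℝ} (r : ℝ) (hF : RepP n F) :
    RepP n (fun φ x => r * F φ x) := by
  obtain ⟨A, D, E, c, d, e, hA, hD, hE, h⟩ := hF
  refine ⟨A, D, E, fun p => r * c p, fun p => r * d p, fun p => r * e p, hA, hD, hE, ?_⟩
  intro φ hφ x
  dsimp only
  rw [h φ hφ x]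
  simp only [mul_assoc, ← Finset.mul_sum]
  ring

private lemma RepP.sub {n : ℕ} {F G : (ℝ → ℝ) → ℝ → ℝ} (hF : RepP n F) (hG : RepP n G) :
    RepP n (fun φ x => F φ x - G φ x) := by
  have := hF.add (hG.smul (-1))
  exact this.congr (by intro φ hφ x; ring)

private lemma RepP.sum {n : ℕ} {s : Finset ℕ} {F : ℕ → (ℝ → ℝ) → ℝ → ℝ}
    (h : ∀ i ∈ s, RepP n (F i)) : RepP n (fun φ x => ∑ i ∈ s, F i φ x) := by
  classical
  induction s using Finset.induction with
  | empty => exact RepP.zero.congr (by simp)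
  | insert a s hns ih =>
    have := (h a (Finset.mem_insert_self a s)).add
      (ih (fun i hi => h i (Finset.mem_insert_of_mem hi)))
    exact this.congr (by intro φ hφ x; rw [Finset.sum_insert hns])

private lemma rep_gA (n a b : ℕ) (hb : b ≤ Mn n) :
    RepP n (fun φ x => x ^ a * iteratedDeriv b φ 1) := by
  refine ⟨{(a, b)}, ∅, ∅, 1, 0, 0, by simpa using hb, by simp, by simp, ?_⟩
  intro φ hφ x; simp

private lemma rep_gD (n a b : ℕ) (hb : b ≤ Mn n) (ha : n ≤ a) :
    RepP n (fun φ x => x ^ a * iteratedDeriv b φ x) := by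
  refine ⟨∅, {(a, b)}, ∅, 0, 1, 0, by simp, by simp [hb, ha], by simp, ?_⟩
  intro φ hφ x; simp

private lemma rep_gE (n a b : ℕ) (hb : b ≤ Mn n) :
    RepP n (fun φ x => x ^ a * ∫ t in x..(1 : ℝ), t ^ n * iteratedDeriv b φ t) := by
  refine ⟨∅, ∅, {(a, b)}, 0, 0, 1, by simp, by simp, by simpa using hb, ?_⟩
  intro φ hφ x; simp

open intervalIntegral
open scoped ContDiff

private lemma smooth_iter {φ : ℝ → ℝ} (hφ : ContDiff ℝ (⊤ : ℕ∞) φ) (v : ℕ) :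
    ContDiff ℝ ∞ (iteratedDeriv v φ) := by
  induction v with
  | zero => simpa using hφ.of_le (by simp)
  | succ v ih => rw [iteratedDeriv_succ]; exact (contDiff_infty_iff_deriv.mp ih).2

private lemma ibp_pow {g : ℝ → ℝ} (hg : Continuous g) (hg' : ∀ t, HasDerivAt g (deriv g t) t)
    (hgd : Continuous (deriv g)) (k : ℕ) (x : ℝ) :
    ∫ t in x..(1:ℝ), t ^ k * g t =
      (1/((k:ℝ)+1)) * g 1 - (1/((k:ℝ)+1)) * (x ^ (k+1) * g x)
        - (1/((k:ℝ)+1)) * ∫ t in x..(1:ℝ), t ^ (k+1) * deriv g t := by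
  have hk : ((k:ℝ)+1) ≠ 0 := by positivity
  have hu : ∀ t ∈ Set.uIcc x 1, HasDerivAt (fun t : ℝ => t ^ (k+1) / ((k:ℝ)+1)) (t ^ k) t := by
    intro t _
    have h := (hasDerivAt_pow (k+1) t).div_const ((k:ℝ)+1)
    exact h.congr_deriv (by rw [Nat.add_sub_cancel]; push_cast; field_simp)
  have H := integral_mul_deriv_eq_deriv_mul hu (fun t _ => hg' t)
      ((continuous_pow k).intervalIntegrable x 1) (hgd.intervalIntegrable x 1)
  have h1 : ∫ t in x..(1:ℝ), (fun t : ℝ => t ^ (k+1) / ((k:ℝ)+1)) t * deriv g t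
      = (1/((k:ℝ)+1)) * ∫ t in x..(1:ℝ), t ^ (k+1) * deriv g t := by
    rw [← intervalIntegral.integral_const_mul]
    have : ∀ t : ℝ, t ^ (k+1) / ((k:ℝ)+1) * deriv g t
        = (1/((k:ℝ)+1)) * (t ^ (k+1) * deriv g t) := by intro t; ring
    simp only [this]
  rw [h1] at H
  have h2 : ∫ t in x..(1:ℝ), t ^ k * g t
      = (1:ℝ) ^ (k+1) / ((k:ℝ)+1) * g 1 - x ^ (k+1) / ((k:ℝ)+1) * g x
        - (1/((k:ℝ)+1)) * ∫ t in x..(1:ℝ), t ^ (k+1) * deriv g t := by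
    linarith [H]
  rw [h2]
  ring

private lemma ibp_shift {g : ℝ → ℝ} (hg' : ∀ t, HasDerivAt g (deriv g t) t)
    (hgd : Continuous (deriv g)) (m : ℕ) (x : ℝ) :
    ∫ t in x..(1:ℝ), (t - x) ^ m * g t =
      (1/((m:ℝ)+1)) * ((1 - x) ^ (m+1) * g 1)
        - (1/((m:ℝ)+1)) * ∫ t in x..(1:ℝ), (t - x) ^ (m+1) * deriv g t := by
  have hm : ((m:ℝ)+1) ≠ 0 := by positivity
  have hu : ∀ t ∈ Set.uIcc x 1,
      HasDerivAt (fun t : ℝ => (t - x) ^ (m+1) / ((m:ℝ)+1)) ((t - x) ^ m) t := by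
    intro t _
    have h := (((hasDerivAt_id t).sub_const x).pow (m+1)).div_const ((m:ℝ)+1)
    exact h.congr_deriv (by rw [Nat.add_sub_cancel]; simp only [id, mul_one]; push_cast; field_simp)
  have H := integral_mul_deriv_eq_deriv_mul hu (fun t _ => hg' t)
      (((continuous_id.sub continuous_const).pow m).intervalIntegrable x 1)
      (hgd.intervalIntegrable x 1)
  have h1 : ∫ t in x..(1:ℝ), (fun t : ℝ => (t - x) ^ (m+1) / ((m:ℝ)+1)) t * deriv g t
      = (1/((m:ℝ)+1)) * ∫ t in x..(1:ℝ), (t - x) ^ (m+1) * deriv g t := by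
    rw [← intervalIntegral.integral_const_mul]
    have : ∀ t : ℝ, (t - x) ^ (m+1) / ((m:ℝ)+1) * deriv g t
        = (1/((m:ℝ)+1)) * ((t - x) ^ (m+1) * deriv g t) := by intro t; ring
    simp only [this]
  rw [h1] at H
  have h2 : ∫ t in x..(1:ℝ), (t - x) ^ m * g t
      = (1 - x) ^ (m+1) / ((m:ℝ)+1) * g 1 - (x - x) ^ (m+1) / ((m:ℝ)+1) * g x
        - (1/((m:ℝ)+1)) * ∫ t in x..(1:ℝ), (t - x) ^ (m+1) * deriv g t := by
    linarith [H]
  rw [h2]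
  simp [zero_pow (Nat.succ_ne_zero m)]
  ring

private lemma one_le_inf : (1 : WithTop ℕ∞) ≤ ∞ := by
  exact_mod_cast (le_top : (1 : ℕ∞) ≤ ⊤)

private lemma twoN (n : ℕ) (hn : 1 ≤ n) : 2 * n ≤ Mn n := by
  have h1 : 4 * n ≤ n * (n + 1) + 2 := by
    rcases Nat.lt_or_ge n 3 with h | h
    · interval_cases n <;> norm_num
    · nlinarith
  have h2 : Mn n = 1 + n * (n + 1) / 2 := rfl
  generalize hP : n * (n + 1) = P at h1 h2
  omega

private lemma nleM (n : ℕ) : n ≤ Mn n := by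
  have h1 : 2 * n ≤ n * (n + 1) + 2 := by
    rcases Nat.lt_or_ge n 3 with h | h
    · interval_cases n <;> norm_num
    · nlinarith
  have h2 : Mn n = 1 + n * (n + 1) / 2 := rfl
  generalize hP : n * (n + 1) = P at h1 h2
  omega

private lemma repB (n : ℕ) : ∀ r u k v : ℕ, k + r = n → n ≤ u + k + 1 → v + r ≤ Mn n →
    RepP n (fun φ x => x ^ u * ∫ t in x..(1:ℝ), t ^ k * iteratedDeriv v φ t) := by
  intro r
  induction r with
  | zero =>
    intro u k v hk hu hv
    have hkn : k = n := by omega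
    subst hkn
    exact rep_gE k u v (by omega)
  | succ r ih =>
    intro u k v hk hu hv
    have h1 := (rep_gA n u v (by omega)).smul (1/((k:ℝ)+1))
    have h2 := (rep_gD n (u+k+1) v (by omega) (by omega)).smul (1/((k:ℝ)+1))
    have h3 := ((ih u (k+1) (v+1) (by omega) (by omega) (by omega))).smul (1/((k:ℝ)+1))
    refine ((h1.sub h2).sub h3).congr ?_
    intro φ hφ x
    have hs := smooth_iter hφ v
    have hg' : ∀ t, HasDerivAt (iteratedDeriv v φ) (deriv (iteratedDeriv v φ) t) t :=
      fun t => ((hs.differentiable (by simp)) t).hasDerivAt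
    have hE := ibp_pow hs.continuous hg' (hs.continuous_deriv one_le_inf) k x
    rw [hE]
    simp only [← iteratedDeriv_succ]
    ring

private lemma binom_one_sub (x y : ℝ) (m : ℕ) :
    ∑ a ∈ Finset.range (m+1), ((-1:ℝ))^a * ((m.choose a) : ℝ) * (x^a * y)
      = (1 - x)^m * y := by
  have h : ((1:ℝ) - x) ^ m = (-x + 1) ^ m := by ring_nf
  rw [h, add_pow, Finset.sum_mul]
  apply Finset.sum_congr rfl
  intro a _
  rw [neg_pow]
  ring

private lemma repShift (n : ℕ) (hn : 1 ≤ n) :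
    ∀ j, j ≤ n - 1 → RepP n (fun φ x =>
      ∫ t in x..(1:ℝ), (t - x) ^ (n - 1 - j) * iteratedDeriv ((n - 1 - j) + 1) φ t) := by
  intro j
  induction j with
  | zero =>
    intro _
    simp only [Nat.sub_zero]
    set m := n - 1 with hm
    have hnm : n = m + 1 := by omega
    have hsum : RepP n (fun φ x => ∑ a ∈ Finset.range (m+1),
        ((-1:ℝ))^(m-a) * ((m.choose a) : ℝ) *
          (x ^ (m-a) * ∫ t in x..(1:ℝ), t ^ a * iteratedDeriv (m+1) φ t)) := by
      apply RepP.sum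
      intro a ha
      have ha' : a ≤ m := by
        have := Finset.mem_range.mp ha; omega
      have h2n := twoN n hn
      exact (repB n (n - a) (m - a) a (m+1) (by omega) (by omega) (by omega)).smul _
    refine hsum.congr ?_
    intro φ hφ x
    have hs := smooth_iter hφ (m+1)
    have hco : ∀ a : ℕ, ((-1:ℝ))^(m-a) * ((m.choose a) : ℝ) *
          (x ^ (m-a) * ∫ t in x..(1:ℝ), t ^ a * iteratedDeriv (m+1) φ t)
        = ∫ t in x..(1:ℝ), ((-1:ℝ))^(m-a) * ((m.choose a) : ℝ) * x ^ (m-a) *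
            (t ^ a * iteratedDeriv (m+1) φ t) := by
      intro a
      rw [intervalIntegral.integral_const_mul]
      ring
    simp only [hco]
    rw [← intervalIntegral.integral_finset_sum]
    · apply intervalIntegral.integral_congr
      intro t _
      dsimp only
      have hb : (t - x) ^ m = (t + (-x)) ^ m := by ring_nf
      rw [hb, add_pow, Finset.sum_mul]
      apply Finset.sum_congr rfl
      intro a _
      rw [neg_pow]
      ring
    · intro a _
      exact ((continuous_const.mul ((continuous_pow a).mul hs.continuous)).intervalIntegrable x 1)
  | succ j ih =>
    intro hj
    have IH := ih (by omega)
    set m := n - 1 - (j + 1) with hm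
    have hm1 : n - 1 - j = m + 1 := by omega
    simp only [hm1] at IH
    have hAm : RepP n (fun φ x => ∑ a ∈ Finset.range (m+1+1),
        ((-1:ℝ))^a * (((m+1).choose a) : ℝ) * (x ^ a * iteratedDeriv (m+1) φ 1)) := by
      apply RepP.sum
      intro a _
      exact (rep_gA n a (m+1) (le_trans (by omega) (nleM n))).smul _
    have H := ((hAm.smul (1/((m:ℝ)+1))).sub (IH.smul (1/((m:ℝ)+1))))
    refine H.congr ?_
    intro φ hφ x
    have hs := smooth_iter hφ (m+1)
    have hg' : ∀ t, HasDerivAt (iteratedDeriv (m+1) φ) (deriv (iteratedDeriv (m+1) φ) t) t :=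
      fun t => ((hs.differentiable (by simp)) t).hasDerivAt
    have hE := ibp_shift hg' (hs.continuous_deriv one_le_inf) m x
    rw [hE, binom_one_sub]
    simp only [← iteratedDeriv_succ]


end TaylorLikeAux

theorem taylor_like_decomposition (n : ℕ) :
    ∃ (A D E : Finset (ℕ × ℕ)) (c d e : ℕ × ℕ → ℝ),
      (∀ p ∈ A, p.2 ≤ 1 + n * (n + 1) / 2) ∧
      (∀ p ∈ D, p.2 ≤ 1 + n * (n + 1) / 2 ∧ n ≤ p.1) ∧
      (∀ p ∈ E, p.2 ≤ 1 + n * (n + 1) / 2) ∧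
      ∀ φ : ℝ → ℝ, ContDiff ℝ (⊤ : ℕ∞) φ → ∀ x : ℝ,
        φ x = (∑ p ∈ A, c p * x ^ p.1 * iteratedDeriv p.2 φ 1) +
          (∑ p ∈ D, d p * x ^ p.1 * iteratedDeriv p.2 φ x) +
          ∑ p ∈ E, e p * x ^ p.1 * ∫ t in x..(1 : ℝ), t ^ n * iteratedDeriv p.2 φ t := by
  have main : RepP n (fun φ x => φ x) := by
    rcases Nat.eq_zero_or_pos n with h0 | h1
    · subst h0
      have hA := rep_gA 0 0 0 (Nat.zero_le _)
      have hE := rep_gE 0 0 1 (by norm_num [Mn])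
      refine (hA.sub hE).congr ?_
      intro φ hφ x
      have hd : Differentiable ℝ φ := by
        have := (smooth_iter hφ 0).differentiable (by simp)
        rwa [iteratedDeriv_zero] at this
      have hc : Continuous (deriv φ) := by
        have := (smooth_iter hφ 0).continuous_deriv one_le_inf
        rwa [iteratedDeriv_zero] at this
      have hFTC : ∫ t in x..(1:ℝ), t ^ 0 * iteratedDeriv 1 φ t = φ 1 - φ x := by
        simp only [pow_zero, one_mul, iteratedDeriv_one]
        exact intervalIntegral.integral_deriv_eq_sub (fun t _ => hd t)
          (hc.intervalIntegrable x 1)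
      rw [hFTC]
      simp [iteratedDeriv_zero]
    · have H := repShift n h1 (n-1) le_rfl
      have e0 : n - 1 - (n - 1) = 0 := by omega
      simp only [e0] at H
      have hA := rep_gA n 0 0 (Nat.zero_le _)
      refine (hA.sub H).congr ?_
      intro φ hφ x
      have hd : Differentiable ℝ φ := by
        have := (smooth_iter hφ 0).differentiable (by simp)
        rwa [iteratedDeriv_zero] at this
      have hc : Continuous (deriv φ) := by
        have := (smooth_iter hφ 0).continuous_deriv one_le_inf
        rwa [iteratedDeriv_zero] at this
      simp only [pow_zero, one_mul, zero_add, iteratedDeriv_one, iteratedDeriv_zero]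
      rw [intervalIntegral.integral_deriv_eq_sub (fun t _ => hd t)
        (hc.intervalIntegrable x 1)]
      ring
  obtain ⟨A, D, E, c, d, e, hA, hD, hE, h⟩ := main
  exact ⟨A, D, E, c, d, e, hA, hD, hE, h⟩
end

section
/- Let σ ≥ 0 and m ∈ ℕ, and set m_σ = m + 1 + (1/2)·⌈σ⌉(⌈σ⌉+1). Then there exists C > 0 such that ‖φ‖_{S^m} ≤ C·‖φ‖_{S_{w,σ}^{m_σ}} for every Schwartz function φ : ℝ → ℝ. -/
open MeasureTheory Real

/-! On `|x| ≥ 1` the weight `|x|^σ` is at least `1`, so only `|x| ≤ 1` needs work. There a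
derivative `g = φ^{(j)}` is recovered from its Taylor expansion of degree `K = ⌈σ⌉` at `-1`
(or `1`) with Cauchy's remainder `g^{(K+1)}(ξ) (x - ξ)^K (x + 1) / K!`: since `ξ` lies between
`-1` and `x ≤ 0`, `|x - ξ|^K ≤ |ξ|^K ≤ |ξ|^σ`, so the weight absorbs the possible singularity
at `0`. This costs `K + 1` extra derivatives, and `m + K + 1 ≤ m_σ`. -/

open Set

lemma mem_idx {m : ℕ} {p : ℕ × ℕ} : p ∈ idx m ↔ p.1 + p.2 ≤ m := by
  simp only [idx, Finset.mem_filter, Finset.mem_product, Finset.mem_range]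
  omega

lemma iteratedDeriv_iteratedDeriv (f : ℝ → ℝ) (j l : ℕ) :
    iteratedDeriv l (iteratedDeriv j f) = iteratedDeriv (j + l) f := by
  simp only [iteratedDeriv_eq_iterate, ← Function.iterate_add_apply, add_comm]

lemma rpow_le_one_add_pow_ceil {r σ : ℝ} (hr : 0 ≤ r) (hσ : 0 ≤ σ) :
    r ^ σ ≤ 1 + r ^ ⌈σ⌉₊ := by
  rcases le_total r 1 with h | h
  · linarith [Real.rpow_le_one hr h hσ, pow_nonneg hr ⌈σ⌉₊]
  · rw [← Real.rpow_natCast]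
    linarith [Real.rpow_le_rpow_of_exponent_le h (Nat.le_ceil σ)]

lemma abs_taylorWithinEval_le {f : ℝ → ℝ} {n : ℕ} {s : Set ℝ} {x₀ x A : ℝ}
    (hx : |x - x₀| ≤ 1) (hA : ∀ k ≤ n, |iteratedDerivWithin k f s x₀| ≤ A) :
    |taylorWithinEval f n s x₀ x| ≤ (n + 1) * A := by
  rw [taylor_within_apply]
  refine (Finset.abs_sum_le_sum_abs _ _).trans ?_
  have hterm : ∀ k ∈ Finset.range (n + 1),
      |((k.factorial : ℝ)⁻¹ * (x - x₀) ^ k) • iteratedDerivWithin k f s x₀| ≤ A := by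
    intro k hk
    have hcoef : |(k.factorial : ℝ)⁻¹ * (x - x₀) ^ k| ≤ 1 := by
      rw [abs_mul, abs_pow, abs_inv, Nat.abs_cast]
      exact mul_le_one₀ (inv_le_one_of_one_le₀ (mod_cast k.factorial_pos))
        (pow_nonneg (abs_nonneg _) k) (pow_le_one₀ (abs_nonneg _) hx)
    rw [smul_eq_mul, abs_mul]
    exact (mul_le_mul hcoef (hA k (Finset.mem_range_succ_iff.mp hk)) (abs_nonneg _)
      zero_le_one).trans_eq (one_mul A)
  calc _ ≤ ∑ _k ∈ Finset.range (n + 1), A := Finset.sum_le_sum hterm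
    _ = (n + 1) * A := by simp

lemma abs_cauchy_remainder_le {σ A a x ξ : ℝ} {K : ℕ} (hK : σ ≤ K) (hξ : ξ ∈ Ioo (-1) x)
    (hx : x ≤ 0) (ha : |ξ| ^ σ * |a| ≤ A) :
    |a * (x - ξ) ^ K / K.factorial * (x - -1)| ≤ A := by
  have hξ0 : ξ < 0 := hξ.2.trans_le hx
  have hdist : (x - ξ) ^ K ≤ |ξ| ^ σ := calc
    (x - ξ) ^ K ≤ |ξ| ^ K :=
      pow_le_pow_left₀ (sub_nonneg.mpr hξ.2.le) (by rw [abs_of_neg hξ0]; linarith) K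
    _ = |ξ| ^ (K : ℝ) := (Real.rpow_natCast _ _).symm
    _ ≤ |ξ| ^ σ := Real.rpow_le_rpow_of_exponent_ge (abs_pos.mpr hξ0.ne)
      (abs_le.mpr ⟨hξ.1.le, by linarith⟩) hK
  have hfact : (1 : ℝ) ≤ K.factorial := mod_cast K.factorial_pos
  rw [abs_mul, abs_div, Nat.abs_cast]
  calc _ ≤ |a * (x - ξ) ^ K| / 1 * 1 := by
        gcongr
        exact abs_le.mpr ⟨by linarith [hξ.1, hξ.2], by linarith⟩
    _ = |a| * (x - ξ) ^ K := by
        rw [abs_mul, abs_of_nonneg (pow_nonneg (sub_nonneg.mpr hξ.2.le) K), div_one, mul_one]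
    _ ≤ |a| * |ξ| ^ σ := by gcongr
    _ ≤ A := by linarith

lemma abs_le_of_weighted_iteratedDeriv_le_of_mem_Icc {g : ℝ → ℝ} {σ A : ℝ} {K : ℕ}
    (hg : ContDiff ℝ (K + 1) g) (hK : σ ≤ K)
    (hA : ∀ l ≤ K + 1, ∀ t, |t| ^ σ * |iteratedDeriv l g t| ≤ A) {x : ℝ}
    (hx : x ∈ Icc (-1) 0) :
    |g x| ≤ (K + 2) * A := by
  have hat_neg_one : ∀ l ≤ K + 1, |iteratedDeriv l g (-1)| ≤ A := fun l hl => by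
    simpa using hA l hl (-1)
  have hA0 : 0 ≤ A := (abs_nonneg _).trans (hat_neg_one 0 (Nat.zero_le _))
  rcases hx.1.eq_or_lt with rfl | hlt
  · have := hat_neg_one 0 (Nat.zero_le _)
    rw [iteratedDeriv_zero] at this
    nlinarith [K.cast_nonneg (α := ℝ)]
  have hs : UniqueDiffOn ℝ (uIcc (-1) x) := uniqueDiffOn_uIcc hlt.ne
  have hwithin : ∀ l ≤ K + 1, ∀ y ∈ uIcc (-1) x,
      iteratedDerivWithin l g (uIcc (-1) x) y = iteratedDeriv l g y := fun l hl y hy =>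
    iteratedDerivWithin_eq_iteratedDeriv hs (hg.of_le (mod_cast hl)).contDiffAt hy
  obtain ⟨ξ, hξ, hrem⟩ := taylor_mean_remainder_cauchy hlt.ne
    (hg.of_le (by norm_cast; omega)).contDiffOn
    ((hg.differentiable_iteratedDeriv K (by norm_cast; omega)).differentiableOn.congr
      fun y hy => hwithin K (by omega) y (uIoo_subset_uIcc_self hy))
  rw [hwithin (K + 1) le_rfl ξ (uIoo_subset_uIcc_self hξ)] at hrem
  rw [uIoo_of_lt hlt] at hξ
  have hpoly : |taylorWithinEval g K (uIcc (-1) x) (-1) x| ≤ (K + 1) * A :=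
    abs_taylorWithinEval_le (abs_le.mpr ⟨by linarith, by linarith [hx.2]⟩) fun k hk =>
      (hwithin k (by omega) (-1) left_mem_uIcc).symm ▸ hat_neg_one k (by omega)
  calc |g x| = |taylorWithinEval g K (uIcc (-1) x) (-1) x +
        iteratedDeriv (K + 1) g ξ * (x - ξ) ^ K / K.factorial * (x - -1)| := by
        rw [← hrem, add_sub_cancel]
    _ ≤ (K + 1) * A + A := (abs_add_le _ _).trans (add_le_add hpoly
      (abs_cauchy_remainder_le hK hξ hx.2 (hA (K + 1) le_rfl ξ)))
    _ = (K + 2) * A := by ring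

lemma abs_le_of_weighted_iteratedDeriv_le {g : ℝ → ℝ} {σ A : ℝ} {K : ℕ}
    (hg : ContDiff ℝ (K + 1) g) (hK : σ ≤ K)
    (hA : ∀ l ≤ K + 1, ∀ t, |t| ^ σ * |iteratedDeriv l g t| ≤ A) {x : ℝ} (hx : |x| ≤ 1) :
    |g x| ≤ (K + 2) * A := by
  rcases le_total x 0 with hx0 | hx0
  · exact abs_le_of_weighted_iteratedDeriv_le_of_mem_Icc hg hK hA ⟨(abs_le.mp hx).1, hx0⟩
  · have hA' : ∀ l ≤ K + 1, ∀ t, |t| ^ σ * |iteratedDeriv l (fun y => g (-y)) t| ≤ A := by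
      intro l hl t
      simpa [iteratedDeriv_comp_neg, abs_mul] using hA l hl (-t)
    simpa using abs_le_of_weighted_iteratedDeriv_le_of_mem_Icc (hg.comp contDiff_neg) hK hA'
      (x := -x) ⟨by linarith [(abs_le.mp hx).2], by linarith⟩

lemma abs_pow_mul_iteratedDeriv_le {g : ℝ → ℝ} {σ B : ℝ} {K M : ℕ} (hg : ContDiff ℝ M g)
    (hσ : 0 ≤ σ) (hK : σ ≤ K)
    (hB : ∀ i j, i + j ≤ M → ∀ x, |x| ^ σ * |x ^ i * iteratedDeriv j g x| ≤ B)
    {i j : ℕ} (hij : i + j + K + 1 ≤ M) (x : ℝ) :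
    |x ^ i * iteratedDeriv j g x| ≤ (K + 2) * B := by
  rcases le_or_gt |x| 1 with hx | hx
  · have hA : ∀ l ≤ K + 1, ∀ t, |t| ^ σ * |iteratedDeriv l (iteratedDeriv j g) t| ≤ B := by
      intro l hl t
      simpa [iteratedDeriv_iteratedDeriv] using hB 0 (j + l) (by omega) t
    have hgj : ContDiff ℝ (K + 1) (iteratedDeriv j g) := by
      rw [iteratedDeriv_eq_iterate]
      exact_mod_cast ContDiff.iterate_deriv' (K + 1) j (hg.of_le (by norm_cast; omega))
    calc |x ^ i * iteratedDeriv j g x| = |x| ^ i * |iteratedDeriv j g x| := by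
          rw [abs_mul, abs_pow]
      _ ≤ |iteratedDeriv j g x| :=
          mul_le_of_le_one_left (abs_nonneg _) (pow_le_one₀ (abs_nonneg _) hx)
      _ ≤ (K + 2) * B := abs_le_of_weighted_iteratedDeriv_le hgj hK hA hx
  · have hB0 : 0 ≤ B := (by positivity : (0 : ℝ) ≤ _).trans (hB 0 0 (Nat.zero_le M) 0)
    calc |x ^ i * iteratedDeriv j g x| ≤ |x| ^ σ * |x ^ i * iteratedDeriv j g x| :=
          le_mul_of_one_le_left (abs_nonneg _) (Real.one_le_rpow hx.le hσ)
      _ ≤ B := hB i j (by omega) x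
      _ ≤ (K + 2) * B := le_mul_of_one_le_left hB0 (by linarith [K.cast_nonneg (α := ℝ)])

lemma bddAbove_range_weighted_schwartz (φ : SchwartzMap ℝ ℝ) {σ : ℝ} (hσ : 0 ≤ σ)
    (i j : ℕ) :
    BddAbove (range fun x : ℝ => |x| ^ σ * |x ^ i * iteratedDeriv j φ x|) := by
  refine ⟨SchwartzMap.seminorm ℝ i j φ + SchwartzMap.seminorm ℝ (⌈σ⌉₊ + i) j φ, ?_⟩
  rintro _ ⟨x, rfl⟩
  have h₁ := SchwartzMap.le_seminorm' ℝ i j φ x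
  have h₂ := SchwartzMap.le_seminorm' ℝ (⌈σ⌉₊ + i) j φ x
  rw [Real.norm_eq_abs] at h₁ h₂
  calc |x| ^ σ * |x ^ i * iteratedDeriv j φ x|
      ≤ (1 + |x| ^ ⌈σ⌉₊) * (|x| ^ i * |iteratedDeriv j φ x|) := by
        rw [abs_mul, abs_pow]
        gcongr
        exact rpow_le_one_add_pow_ceil (abs_nonneg x) hσ
    _ = |x| ^ i * |iteratedDeriv j φ x| + |x| ^ (⌈σ⌉₊ + i) * |iteratedDeriv j φ x| := by ring
    _ ≤ _ := add_le_add h₁ h₂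

lemma weighted_le_gNormNonneg (φ : SchwartzMap ℝ ℝ) {σ : ℝ} (hσ : 0 ≤ σ) {M i j : ℕ}
    (hij : i + j ≤ M) (x : ℝ) :
    |x| ^ σ * |x ^ i * iteratedDeriv j φ x| ≤ gNormNonneg σ M (derivFam φ) := by
  refine (le_ciSup (bddAbove_range_weighted_schwartz φ hσ i j) x).trans ?_
  exact Finset.single_le_sum
    (f := fun p : ℕ × ℕ => ⨆ y : ℝ, |y| ^ σ * |y ^ p.1 * derivFam φ p.2 y|)
    (fun _ _ => Real.iSup_nonneg fun _ => by positivity) (mem_idx.mpr hij : (i, j) ∈ idx M)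

lemma SNorm_le_of_forall_le {m : ℕ} {φ : ℝ → ℝ} {C : ℝ}
    (h : ∀ i j, i + j ≤ m → ∀ x, |x ^ i * iteratedDeriv j φ x| ≤ C) :
    SNorm m φ ≤ (idx m).card * C := by
  calc SNorm m φ ≤ ∑ _p ∈ idx m, C :=
        Finset.sum_le_sum fun p hp => ciSup_le (h p.1 p.2 (mem_idx.mp hp))
    _ = (idx m).card * C := by rw [Finset.sum_const, nsmul_eq_mul]

theorem weakly_perturbed_le_schwartz_nonneg (σ : ℝ) (hσ : 0 ≤ σ) (m msig : ℕ)
    (hmsig : (msig : ℝ) = m + 1 + (⌈σ⌉ : ℝ) * ((⌈σ⌉ : ℝ) + 1) / 2) :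
    ∃ C > 0, ∀ φ : SchwartzMap ℝ ℝ,
      SNorm m ⇑φ ≤ C * gNormNonneg σ msig (derivFam ⇑φ) := by
  have hmK : m + ⌈σ⌉₊ + 1 ≤ msig := by
    have hceil : ((⌈σ⌉ : ℤ) : ℝ) = ⌈σ⌉₊ := by
      rw [← Int.natCast_ceil_eq_ceil hσ, Int.cast_natCast]
    have hsq : (⌈σ⌉₊ : ℝ) ≤ ⌈σ⌉₊ * ⌈σ⌉₊ := mod_cast Nat.le_mul_self _
    rw [hceil] at hmsig
    exact_mod_cast (by linarith : (m : ℝ) + ⌈σ⌉₊ + 1 ≤ msig)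
  have hidx : 0 < ((idx m).card : ℝ) :=
    mod_cast Finset.card_pos.mpr ⟨(0, 0), mem_idx.mpr (Nat.zero_le m)⟩
  refine ⟨(idx m).card * (⌈σ⌉₊ + 2), by positivity, fun φ => ?_⟩
  rw [mul_assoc]
  exact SNorm_le_of_forall_le fun i j hij x =>
    abs_pow_mul_iteratedDeriv_le ((φ.smooth ⊤).of_le (by exact_mod_cast le_top)) hσ
      (Nat.le_ceil σ) (fun _ _ h => weighted_le_gNormNonneg φ hσ h) (by omega) x
end

section
/- Let −1/2 < σ < 0 and m ∈ ℕ. Then there exists C > 0 such that ‖φ‖_{S_{w,σ}^m} ≤ C·‖φ‖_{S^{m+1}} for every Schwartz function φ : ℝ → ℝ that is either even or odd. -/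
open MeasureTheory Real

/-! Every term of the weakly perturbed norm is dominated by a term of `‖φ‖_{S^{m+1}}`: without
weight on `0 < |x| ≤ 1`, and with `|x|^σ ≤ 1` on `|x| ≥ 1`. The remaining terms
`sup_{x ≠ 0} |x|^σ |x^i φ^{(j)}(x)|` are those where the parity of `i + j` is opposite to that of
`φ`, so `x^i φ^{(j)}` vanishes at `0`; the mean value theorem then bounds it by
`(m + 1) ‖φ‖_{S^{m+1}} |x|`, and `|x|^{σ+1} ≤ 1` for `|x| ≤ 1` because `σ ≥ -1`. -/

open scoped SchwartzMap

theorem iteratedDeriv_zero_eq_zero_of_comp_neg_eq {f : ℝ → ℝ} {k n : ℕ}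
    (hf : ∀ x, f (-x) = (-1) ^ k * f x) (hnk : Odd (n + k)) : iteratedDeriv n f 0 = 0 := by
  have h := iteratedDeriv_comp_neg n f 0
  simp only [hf, iteratedDeriv_const_mul_field, neg_zero, smul_eq_mul] at h
  have hnk' : (-1 : ℝ) ^ n * (-1) ^ k = -1 := by rw [← pow_add, hnk.neg_one_pow]
  have hk : (-1 : ℝ) ^ k * (-1) ^ k = 1 := by rw [← pow_add, ← two_mul, pow_mul]; norm_num
  linear_combination ((-1 : ℝ) ^ k * h - iteratedDeriv n f 0 * hk
    + iteratedDeriv n f 0 * hnk') / 2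

theorem zero_pow_mul_iteratedDeriv_zero_eq_zero {f : ℝ → ℝ} {i j k : ℕ}
    (hf : ∀ x, f (-x) = (-1) ^ k * f x) (hijk : Odd (i + j + k)) :
    (0 : ℝ) ^ i * iteratedDeriv j f 0 = 0 := by
  rcases Nat.eq_zero_or_pos i with rfl | hi
  · rw [zero_add] at hijk
    rw [iteratedDeriv_zero_eq_zero_of_comp_neg_eq hf hijk, mul_zero]
  · rw [zero_pow hi.ne', zero_mul]

theorem le_and_even_of_mem_idxE {m : ℕ} {p : ℕ × ℕ} (hp : p ∈ idxE m) :
    p.1 + p.2 ≤ m ∧ Even (p.1 + p.2) :=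
  ⟨(Finset.mem_filter.1 (Finset.mem_filter.1 hp).1).2, (Finset.mem_filter.1 hp).2⟩

theorem le_and_odd_of_mem_idxO {m : ℕ} {p : ℕ × ℕ} (hp : p ∈ idxO m) :
    p.1 + p.2 ≤ m ∧ Odd (p.1 + p.2) :=
  ⟨(Finset.mem_filter.1 (Finset.mem_filter.1 hp).1).2,
    Nat.not_even_iff_odd.1 (Finset.mem_filter.1 hp).2⟩

theorem mem_idx_s13 {m i j : ℕ} (h : i + j ≤ m) : (i, j) ∈ idx m := by
  simp only [idx, Finset.mem_filter, Finset.mem_product, Finset.mem_range]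
  omega

theorem card_idxE_add_card_idxO (m : ℕ) : (idxE m).card + (idxO m).card = (idx m).card :=
  Finset.card_filter_add_card_filter_not _

theorem card_idx_pos (m : ℕ) : 0 < (idx m).card :=
  Finset.card_pos.2 ⟨(0, 0), mem_idx_s13 (Nat.zero_le m)⟩

theorem abs_rpow_mul_le_of_le_mul_abs {σ a A x : ℝ} (hσ₁ : -1 ≤ σ) (hσ₀ : σ ≤ 0)
    (hx : x ≠ 0) (ha : 0 ≤ a) (haA : a ≤ A) (haAx : a ≤ A * |x|) : |x| ^ σ * a ≤ A := by
  rcases le_total |x| 1 with hx₁ | hx₁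
  · have hx₀ : 0 < |x| := abs_pos.2 hx
    calc |x| ^ σ * a ≤ |x| ^ σ * (A * |x|) := by gcongr
      _ = A * |x| ^ (σ + 1) := by rw [Real.rpow_add hx₀, Real.rpow_one]; ring
      _ ≤ A * 1 := by gcongr; exacts [ha.trans haA, Real.rpow_le_one hx₀.le hx₁ (by linarith)]
      _ = A := mul_one A
  · exact (mul_le_of_le_one_left ha (Real.rpow_le_one_of_one_le_of_nonpos hx₁ hσ₀)).trans haA

theorem SNorm_nonneg (m : ℕ) (φ : ℝ → ℝ) : 0 ≤ SNorm m φ :=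
  Finset.sum_nonneg fun _ _ => Real.iSup_nonneg fun _ => abs_nonneg _

namespace SchwartzMap

variable (φ : 𝓢(ℝ, ℝ)) {σ : ℝ} {m i j : ℕ}

theorem bddAbove_abs_pow_mul_iteratedDeriv (i j : ℕ) :
    BddAbove (Set.range fun x : ℝ => |x ^ i * iteratedDeriv j φ x|) :=
  ⟨SchwartzMap.seminorm ℝ i j φ, Set.forall_mem_range.2 fun x => by
    simpa only [abs_mul, abs_pow, Real.norm_eq_abs] using le_seminorm' ℝ i j φ x⟩

theorem abs_pow_mul_iteratedDeriv_le_SNorm (hij : i + j ≤ m) (x : ℝ) :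
    |x ^ i * iteratedDeriv j φ x| ≤ SNorm m φ :=
  (le_ciSup (φ.bddAbove_abs_pow_mul_iteratedDeriv i j) x).trans <|
    Finset.single_le_sum (f := fun p : ℕ × ℕ => ⨆ y : ℝ, |y ^ p.1 * iteratedDeriv p.2 φ y|)
      (fun _ _ => Real.iSup_nonneg fun _ => abs_nonneg _) (mem_idx_s13 hij)

theorem hasDerivAt_pow_mul_iteratedDeriv (i j : ℕ) (y : ℝ) :
    HasDerivAt (fun x => x ^ i * iteratedDeriv j φ x)
      (i * y ^ (i - 1) * iteratedDeriv j φ y + y ^ i * iteratedDeriv (j + 1) φ y) y := by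
  have hφj : Differentiable ℝ (iteratedDeriv j φ) :=
    (φ.smooth ⊤).differentiable_iteratedDeriv j (by exact_mod_cast WithTop.coe_lt_top _)
  rw [iteratedDeriv_succ]
  exact (hasDerivAt_pow i y).mul (hφj y).hasDerivAt

theorem abs_deriv_pow_mul_iteratedDeriv_le (hij : i + j ≤ m) (y : ℝ) :
    |i * y ^ (i - 1) * iteratedDeriv j φ y + y ^ i * iteratedDeriv (j + 1) φ y|
      ≤ (m + 1) * SNorm (m + 1) φ := by
  have h₁ := φ.abs_pow_mul_iteratedDeriv_le_SNorm (i := i - 1) (j := j) (m := m + 1) (by omega) y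
  have h₂ := φ.abs_pow_mul_iteratedDeriv_le_SNorm (i := i) (j := j + 1) (m := m + 1) (by omega) y
  have hi : (i : ℝ) ≤ m := by exact_mod_cast (by omega : i ≤ m)
  calc _ ≤ i * |y ^ (i - 1) * iteratedDeriv j φ y| + |y ^ i * iteratedDeriv (j + 1) φ y| := by
        exact (abs_add_le _ _).trans_eq (by rw [mul_assoc, abs_mul, Nat.abs_cast])
    _ ≤ m * SNorm (m + 1) φ + SNorm (m + 1) φ := by gcongr
    _ = (m + 1) * SNorm (m + 1) φ := by ring

theorem abs_pow_mul_iteratedDeriv_le_mul_abs (hij : i + j ≤ m)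
    (h₀ : (0 : ℝ) ^ i * iteratedDeriv j φ 0 = 0) (x : ℝ) :
    |x ^ i * iteratedDeriv j φ x| ≤ (m + 1) * SNorm (m + 1) φ * |x| := by
  have h := Convex.norm_image_sub_le_of_norm_deriv_le (s := Set.univ) (x := 0) (y := x)
    (fun y _ => (φ.hasDerivAt_pow_mul_iteratedDeriv i j y).differentiableAt)
    (fun y _ => ((φ.hasDerivAt_pow_mul_iteratedDeriv i j y).deriv).symm ▸
      φ.abs_deriv_pow_mul_iteratedDeriv_le hij y)
    convex_univ (Set.mem_univ _) (Set.mem_univ _)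
  simpa only [h₀, sub_zero, Real.norm_eq_abs] using h

theorem iSup_abs_pow_mul_iteratedDeriv_le (P : ℝ → Prop) (hij : i + j ≤ m) :
    (⨆ x : {x : ℝ // P x}, |(x : ℝ) ^ i * iteratedDeriv j φ x|) ≤ SNorm m φ :=
  Real.iSup_le (fun x => φ.abs_pow_mul_iteratedDeriv_le_SNorm hij x) (SNorm_nonneg m φ)

theorem iSup_abs_rpow_mul_le_of_one_le (hσ₀ : σ ≤ 0) (hij : i + j ≤ m) :
    (⨆ x : {x : ℝ // 1 ≤ |x|}, |(x : ℝ)| ^ σ * |(x : ℝ) ^ i * iteratedDeriv j φ x|)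
      ≤ SNorm m φ :=
  Real.iSup_le (fun x => (mul_le_of_le_one_left (abs_nonneg _)
      (Real.rpow_le_one_of_one_le_of_nonpos x.2 hσ₀)).trans
        (φ.abs_pow_mul_iteratedDeriv_le_SNorm hij x)) (SNorm_nonneg m φ)

theorem iSup_abs_rpow_mul_le_of_ne_zero (hσ₁ : -1 ≤ σ) (hσ₀ : σ ≤ 0) (hij : i + j ≤ m)
    (h₀ : (0 : ℝ) ^ i * iteratedDeriv j φ 0 = 0) :
    (⨆ x : {x : ℝ // x ≠ 0}, |(x : ℝ)| ^ σ * |(x : ℝ) ^ i * iteratedDeriv j φ x|)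
      ≤ (m + 1) * SNorm (m + 1) φ := by
  have hK := SNorm_nonneg (m + 1) φ
  refine Real.iSup_le (fun x => abs_rpow_mul_le_of_le_mul_abs hσ₁ hσ₀ x.2 (abs_nonneg _) ?_
    (φ.abs_pow_mul_iteratedDeriv_le_mul_abs hij h₀ x)) (by positivity)
  exact (φ.abs_pow_mul_iteratedDeriv_le_SNorm (by omega) x).trans
    (le_mul_of_one_le_left hK (by linarith [(m.cast_nonneg : (0 : ℝ) ≤ m)]))

theorem sum_iSup_add_sum_iSup_le {k : ℕ} (hφ : ∀ x, φ (-x) = (-1) ^ k * φ x)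
    (hσ₁ : -1 ≤ σ) (hσ₀ : σ ≤ 0) {S T : Finset (ℕ × ℕ)} (hS : ∀ p ∈ S, p.1 + p.2 ≤ m)
    (hT : ∀ p ∈ T, p.1 + p.2 ≤ m ∧ Odd (p.1 + p.2 + k)) :
    (∑ p ∈ S, ((⨆ x : {x : ℝ // 0 < |x| ∧ |x| ≤ 1}, |(x : ℝ) ^ p.1 * iteratedDeriv p.2 φ x|) +
        ⨆ x : {x : ℝ // 1 ≤ |x|}, |(x : ℝ)| ^ σ * |(x : ℝ) ^ p.1 * iteratedDeriv p.2 φ x|)) +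
      ∑ p ∈ T, ⨆ x : {x : ℝ // x ≠ 0}, |(x : ℝ)| ^ σ * |(x : ℝ) ^ p.1 * iteratedDeriv p.2 φ x|
      ≤ ((S.card + T.card : ℕ) : ℝ) * ((m + 2) * SNorm (m + 1) φ) := by
  have hK := SNorm_nonneg (m + 1) φ
  rw [Nat.cast_add, add_mul, ← nsmul_eq_mul, ← nsmul_eq_mul]
  refine add_le_add (Finset.sum_le_card_nsmul _ _ _ fun p hp => ?_)
    (Finset.sum_le_card_nsmul _ _ _ fun p hp => ?_)
  · have := φ.iSup_abs_pow_mul_iteratedDeriv_le (fun x => 0 < |x| ∧ |x| ≤ 1)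
      (Nat.le_succ_of_le (hS p hp))
    have := φ.iSup_abs_rpow_mul_le_of_one_le hσ₀ (Nat.le_succ_of_le (hS p hp))
    nlinarith [(m.cast_nonneg : (0 : ℝ) ≤ m)]
  · have := φ.iSup_abs_rpow_mul_le_of_ne_zero hσ₁ hσ₀ (hT p hp).1
      (zero_pow_mul_iteratedDeriv_zero_eq_zero hφ (hT p hp).2)
    linarith

end SchwartzMap

theorem schwartz_le_weakly_perturbed_neg (σ : ℝ) (hσ : -(1/2) < σ) (hσ' : σ < 0) (m : ℕ) :
    ∃ C > 0, ∀ φ : SchwartzMap ℝ ℝ,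
      ((∀ x, φ (-x) = φ x) → gNormNegE σ m (derivFam ⇑φ) ≤ C * SNorm (m + 1) ⇑φ) ∧
      ((∀ x, φ (-x) = -φ x) → gNormNegO σ m (derivFam ⇑φ) ≤ C * SNorm (m + 1) ⇑φ) := by
  have hσ₁ : -1 ≤ σ := by linarith
  have hC : ((m + 2) * (idx m).card : ℝ) = ((idxE m).card + (idxO m).card : ℕ) * (m + 2) := by
    rw [card_idxE_add_card_idxO]; ring
  refine ⟨(m + 2) * (idx m).card, by have := card_idx_pos m; positivity, fun φ => ⟨?_, ?_⟩⟩
  · intro hφ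
    rw [hC, mul_assoc]
    exact φ.sum_iSup_add_sum_iSup_le (k := 0) (by simpa using hφ) hσ₁ hσ'.le
      (fun p hp => (le_and_even_of_mem_idxE hp).1)
      (fun p hp => by simpa using le_and_odd_of_mem_idxO hp)
  · intro hφ
    rw [hC, add_comm ((idxE m).card), mul_assoc]
    exact φ.sum_iSup_add_sum_iSup_le (k := 1) (by simpa using hφ) hσ₁ hσ'.le
      (fun p hp => (le_and_odd_of_mem_idxO hp).1)
      (fun p hp => ⟨(le_and_even_of_mem_idxE hp).1, (le_and_even_of_mem_idxE hp).2.add_one⟩)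
end

section
/- Let σ > −1/2, s > 0, let U ⊂ (0,∞) be an open set, let f₁ ∈ C¹(U), f₂ ∈ C(U), and let h ∈ C²(U) be positive. Consider the differential operator P acting on C²-functions on U by Pu = −u'' + s²x²u − 2f₁u' + f₂u. Then the identity P(h·(φ|_U)) = h·((L_σφ)|_U) holds on U for every even Schwartz function φ : ℝ → ℝ if and only if f₂(x) = σ(σ−1)x^{−2} − f₁(x)² − f₁'(x) on U and h(x) = x^σ·e^{−F₁(x)} on U for some function F₁ ∈ C²(U) with F₁' = f₁. -/
open MeasureTheory Real

/-!
On even functions the Dunkl term is `2σ φ'(x) / x`, so `P (h φ) - h L_σ φ` is, at each `x ∈ U`,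
a first-order expression `A(x) φ(x) + B(x) φ'(x)`. Even Schwartz functions equal to `1`,
respectively `y²`, near `x` show that it vanishes for all `φ` iff `A = B = 0`. The equation
`B = 0` says `h' / h = σ / x - f₁`, i.e. `h = x^σ e^{-F₁}` with `F₁' = f₁`, and substituting
`h'' = ((h'/h)' + (h'/h)²) h` into `A = 0` gives `f₂ = σ(σ-1)/x² - f₁² - f₁'`.
-/

open Filter Topology
open scoped ContDiff SchwartzMap

section DunklEven

variable {φ : ℝ → ℝ}

lemma oddPart_eq_zero_of_even (hφ : Function.Even φ) : oddPart φ = 0 := by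
  funext y
  simp [oddPart, hφ y]

lemma oddPart_deriv_of_even (hφ : Function.Even φ) : oddPart (deriv φ) = deriv φ := by
  have hodd (y : ℝ) : deriv φ (-y) = -deriv φ y := by
    simpa [funext hφ] using deriv_comp_neg (f := φ) (x := -y)
  funext y
  simp only [oddPart, hodd]
  ring

lemma dunklT_of_even (σ : ℝ) (hφ : Function.Even φ) : dunklT σ φ = deriv φ := by
  funext y
  simp [dunklT, invX, oddPart_eq_zero_of_even hφ]

lemma dunklL_of_even (σ s : ℝ) (hφ : Function.Even φ) {x : ℝ} (hx : x ≠ 0) :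
    dunklL σ s φ x = -deriv (deriv φ) x - 2 * σ * deriv φ x / x + s ^ 2 * x ^ 2 * φ x := by
  simp only [dunklL, dunklT_of_even σ hφ, dunklT, oddPart_deriv_of_even hφ, invX, if_neg hx]
  ring

end DunklEven

lemma exists_even_schwartzMap_eventuallyEq {g : ℝ → ℝ} (hg : ContDiff ℝ ∞ g)
    (hge : Function.Even g) (x₀ : ℝ) :
    ∃ φ : 𝓢(ℝ, ℝ), Function.Even φ ∧ ⇑φ =ᶠ[𝓝 x₀] g := by
  let c : ContDiffBump (0 : ℝ) := ⟨|x₀| + 1, |x₀| + 2, by positivity, by linarith⟩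
  refine ⟨(c.hasCompactSupport.mul_left (f := g)).toSchwartzMap (hg.mul c.contDiff),
    fun y => by simp [hge y, c.neg y], ?_⟩
  have hc : ⇑c =ᶠ[𝓝 x₀] 1 :=
    c.eventuallyEq_one_of_mem_ball (by simp [c])
  filter_upwards [hc] with y hy
  simp [hy]

lemma eq_zero_of_forall_even_schwartzMap {x a b : ℝ} (hx : x ≠ 0)
    (H : ∀ φ : 𝓢(ℝ, ℝ), Function.Even φ → a * φ x + b * deriv φ x = 0) : a = 0 ∧ b = 0 := by
  obtain ⟨φ₁, hφ₁, hφ₁x⟩ := exists_even_schwartzMap_eventuallyEq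
    (contDiff_const (c := (1 : ℝ))) (fun _ => rfl) x
  obtain ⟨φ₂, hφ₂, hφ₂x⟩ := exists_even_schwartzMap_eventuallyEq (contDiff_id.pow 2)
    (fun y => by simp) x
  have h₁ := H φ₁ hφ₁
  have h₂ := H φ₂ hφ₂
  rw [hφ₁x.eq_of_nhds, hφ₁x.deriv_eq] at h₁
  rw [hφ₂x.eq_of_nhds, hφ₂x.deriv_eq] at h₂
  simp only [deriv_const, mul_zero, add_zero, mul_one] at h₁
  simp only [id, deriv_pow_field, Nat.cast_ofNat, h₁, zero_mul, zero_add] at h₂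
  exact ⟨h₁, by simpa [hx] using h₂⟩

lemma deriv_deriv_mul {U : Set ℝ} (hU : IsOpen U) {x : ℝ} (hx : x ∈ U) {h φ : ℝ → ℝ}
    (hh : ContDiffOn ℝ 2 h U) (hφ : ContDiffOn ℝ 2 φ U) :
    deriv (deriv fun y => h y * φ y) x =
      deriv (deriv h) x * φ x + 2 * (deriv h x * deriv φ x) + h x * deriv (deriv φ) x := by
  have hd {u : ℝ → ℝ} (hu : ContDiffOn ℝ 2 u U) {y : ℝ} (hy : y ∈ U) : DifferentiableAt ℝ u y :=
    (hu.contDiffAt (hU.mem_nhds hy)).differentiableAt two_ne_zero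
  have hd' {u : ℝ → ℝ} (hu : ContDiffOn ℝ 2 u U) : DifferentiableAt ℝ (deriv u) x :=
    ((hu.deriv_of_isOpen hU (by norm_num)).contDiffAt (hU.mem_nhds hx)).differentiableAt
      one_ne_zero
  have hprod : deriv (fun y => h y * φ y) =ᶠ[𝓝 x] fun y => deriv h y * φ y + h y * deriv φ y :=
    eventuallyEq_of_mem (hU.mem_nhds hx) fun y hy => deriv_fun_mul (hd hh hy) (hd hφ hy)
  rw [hprod.deriv_eq, deriv_fun_add ((hd' hh).fun_mul (hd hφ hx)) ((hd hh hx).fun_mul (hd' hφ)),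
    deriv_fun_mul (hd' hh) (hd hφ hx), deriv_fun_mul (hd hh hx) (hd' hφ)]
  ring

lemma perturbed_sub_mul_dunklL_of_even (σ s : ℝ) {U : Set ℝ} (hU : IsOpen U) {x : ℝ}
    (hxU : x ∈ U) (hx : x ≠ 0) (f₁ f₂ : ℝ → ℝ) {h φ : ℝ → ℝ} (hh : ContDiffOn ℝ 2 h U)
    (hφ : ContDiff ℝ 2 φ) (hφe : Function.Even φ) :
    -deriv (deriv fun y => h y * φ y) x + s ^ 2 * x ^ 2 * (h x * φ x) -
        2 * f₁ x * deriv (fun y => h y * φ y) x + f₂ x * (h x * φ x) - h x * dunklL σ s φ x =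
      (-deriv (deriv h) x - 2 * f₁ x * deriv h x + f₂ x * h x) * φ x +
        2 * ((σ / x - f₁ x) * h x - deriv h x) * deriv φ x := by
  rw [deriv_deriv_mul hU hxU hh hφ.contDiffOn,
    deriv_fun_mul ((hh.contDiffAt (hU.mem_nhds hxU)).differentiableAt two_ne_zero)
      (hφ.differentiable two_ne_zero x),
    dunklL_of_even σ s hφe hx]
  field_simp
  ring

lemma forall_even_schwartzMap_iff (σ s : ℝ) {U : Set ℝ} (hU : IsOpen U)
    (hUsub : U ⊆ Set.Ioi 0) (f₁ f₂ : ℝ → ℝ) {h : ℝ → ℝ} (hh : ContDiffOn ℝ 2 h U) :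
    (∀ φ : SchwartzMap ℝ ℝ, (∀ x, φ (-x) = φ x) → ∀ x ∈ U,
        -deriv (deriv fun y => h y * φ y) x + s ^ 2 * x ^ 2 * (h x * φ x) -
            2 * f₁ x * deriv (fun y => h y * φ y) x + f₂ x * (h x * φ x) =
          h x * dunklL σ s (⇑φ) x) ↔
      ∀ x ∈ U, -deriv (deriv h) x - 2 * f₁ x * deriv h x + f₂ x * h x = 0 ∧
        deriv h x = (σ / x - f₁ x) * h x := by
  have hdefect (φ : SchwartzMap ℝ ℝ) (hφ : Function.Even φ) {x : ℝ} (hx : x ∈ U) :=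
    perturbed_sub_mul_dunklL_of_even σ s hU hx (hUsub hx).ne' f₁ f₂ hh (φ.smooth 2) hφ
  constructor
  · intro H x hx
    obtain ⟨hA, hB⟩ := eq_zero_of_forall_even_schwartzMap (hUsub hx).ne' fun φ hφ => by
      rw [← hdefect φ hφ hx, sub_eq_zero]
      exact H φ hφ x hx
    exact ⟨hA, by linarith⟩
  · intro H φ hφ x hx
    obtain ⟨hA, hB⟩ := H x hx
    rw [← sub_eq_zero, hdefect φ hφ hx, hA, hB]
    ring

lemma deriv_deriv_of_deriv_eq_mul {U : Set ℝ} (hU : IsOpen U) {x : ℝ} (hx : x ∈ U)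
    {g h : ℝ → ℝ} (hg : DifferentiableAt ℝ g x) (hh : DifferentiableAt ℝ h x)
    (H : ∀ y ∈ U, deriv h y = g y * h y) :
    deriv (deriv h) x = (deriv g x + g x ^ 2) * h x := by
  rw [(eventuallyEq_of_mem (hU.mem_nhds hx) H).deriv_eq, deriv_fun_mul hg hh, H x hx]
  ring

lemma zeroth_order_coeff_eq_zero_iff {σ x : ℝ} (hx : x ≠ 0) {U : Set ℝ} (hU : IsOpen U)
    (hxU : x ∈ U) {f₁ f₂ h : ℝ → ℝ} (hf₁ : DifferentiableAt ℝ f₁ x)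
    (hh : DifferentiableAt ℝ h x) (hhx : h x ≠ 0) (H : ∀ y ∈ U, deriv h y = (σ / y - f₁ y) * h y) :
    -deriv (deriv h) x - 2 * f₁ x * deriv h x + f₂ x * h x = 0 ↔
      f₂ x = σ * (σ - 1) / x ^ 2 - f₁ x ^ 2 - deriv f₁ x := by
  have hg : HasDerivAt (fun y => σ / y - f₁ y) (-σ / x ^ 2 - deriv f₁ x) x := by
    simpa [div_eq_mul_inv, neg_div] using
      ((hasDerivAt_inv hx).const_mul σ).fun_sub hf₁.hasDerivAt
  rw [deriv_deriv_of_deriv_eq_mul hU hxU hg.differentiableAt hh H, hg.deriv, H x hxU]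
  have hfactor : -((-σ / x ^ 2 - deriv f₁ x + (σ / x - f₁ x) ^ 2) * h x) -
      2 * f₁ x * ((σ / x - f₁ x) * h x) + f₂ x * h x =
      h x * (f₂ x - (σ * (σ - 1) / x ^ 2 - f₁ x ^ 2 - deriv f₁ x)) := by
    field_simp
    ring
  rw [hfactor, mul_eq_zero, sub_eq_zero, or_iff_right hhx]

lemma hasDerivAt_rpow_mul_exp_neg {σ x f : ℝ} {F : ℝ → ℝ} (hx : 0 < x) (hF : HasDerivAt F f x) :
    HasDerivAt (fun y => y ^ σ * exp (-F y)) ((σ / x - f) * (x ^ σ * exp (-F x))) x := by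
  refine ((hasDerivAt_rpow_const (p := σ) (Or.inl hx.ne')).fun_mul hF.neg.exp).congr_deriv ?_
  rw [rpow_sub_one hx.ne', Pi.neg_apply]
  field_simp
  ring

lemma deriv_eq_mul_iff_exists_eq_rpow_mul_exp {σ : ℝ} {U : Set ℝ} (hU : IsOpen U)
    (hUsub : U ⊆ Set.Ioi 0) {f₁ h : ℝ → ℝ} (hh : ContDiffOn ℝ 2 h U)
    (hhpos : ∀ x ∈ U, 0 < h x) :
    (∀ x ∈ U, deriv h x = (σ / x - f₁ x) * h x) ↔
      ∃ F₁ : ℝ → ℝ, ContDiffOn ℝ 2 F₁ U ∧ (∀ x ∈ U, deriv F₁ x = f₁ x) ∧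
        ∀ x ∈ U, h x = x ^ σ * exp (-F₁ x) := by
  constructor
  · intro H
    refine ⟨fun y => σ * log y - log (h y), ?_, fun x hx => ?_, fun x hx => ?_⟩
    · exact (contDiffOn_const.mul (contDiffOn_log.mono fun y hy => (hUsub hy).ne')).sub
        (hh.log fun y hy => (hhpos y hy).ne')
    · have hhd := (hh.contDiffAt (hU.mem_nhds hx)).differentiableAt two_ne_zero
      rw [(((hasDerivAt_log (hUsub hx).ne').const_mul σ).fun_sub
        (hhd.hasDerivAt.log (hhpos x hx).ne')).deriv, H x hx]
      field_simp [(hhpos x hx).ne']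
      ring
    · rw [neg_sub, exp_sub, exp_log (hhpos x hx), rpow_def_of_pos (hUsub hx), mul_comm σ]
      field_simp
  · rintro ⟨F₁, hF₁, hF₁', hhF₁⟩ x hx
    have hF₁x : HasDerivAt F₁ (f₁ x) x :=
      hF₁' x hx ▸ ((hF₁.contDiffAt (hU.mem_nhds hx)).differentiableAt two_ne_zero).hasDerivAt
    rw [(eventuallyEq_of_mem (hU.mem_nhds hx) hhF₁).deriv_eq,
      (hasDerivAt_rpow_mul_exp_neg (hUsub hx) hF₁x).deriv, hhF₁ x hx]

theorem perturbed_harmonic_oscillator_characterization_general (σ s : ℝ)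
    (U : Set ℝ) (hU : IsOpen U) (hUsub : U ⊆ Set.Ioi (0 : ℝ))
    (f₁ f₂ h : ℝ → ℝ) (hf₁ : ContDiffOn ℝ 1 f₁ U)
    (hh : ContDiffOn ℝ 2 h U) (hhpos : ∀ x ∈ U, 0 < h x) :
    (∀ φ : SchwartzMap ℝ ℝ, (∀ x, φ (-x) = φ x) → ∀ x ∈ U,
        -deriv (deriv fun y => h y * φ y) x + s ^ 2 * x ^ 2 * (h x * φ x) -
            2 * f₁ x * deriv (fun y => h y * φ y) x + f₂ x * (h x * φ x) =
          h x * dunklL σ s (⇑φ) x) ↔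
      ((∀ x ∈ U, f₂ x = σ * (σ - 1) / x ^ 2 - f₁ x ^ 2 - deriv f₁ x) ∧
        ∃ F₁ : ℝ → ℝ, ContDiffOn ℝ 2 F₁ U ∧ (∀ x ∈ U, deriv F₁ x = f₁ x) ∧
          ∀ x ∈ U, h x = x ^ σ * Real.exp (-F₁ x)) := by
  rw [forall_even_schwartzMap_iff σ s hU hUsub f₁ f₂ hh,
    ← deriv_eq_mul_iff_exists_eq_rpow_mul_exp hU hUsub hh hhpos]
  have hcoeff (hODE : ∀ x ∈ U, deriv h x = (σ / x - f₁ x) * h x) {x : ℝ} (hx : x ∈ U) :=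
    zeroth_order_coeff_eq_zero_iff (f₂ := f₂) (hUsub hx).ne' hU hx
      ((hf₁.contDiffAt (hU.mem_nhds hx)).differentiableAt one_ne_zero)
      ((hh.contDiffAt (hU.mem_nhds hx)).differentiableAt two_ne_zero) (hhpos x hx).ne' hODE
  constructor
  · intro H
    have hODE (x : ℝ) (hx : x ∈ U) := (H x hx).2
    exact ⟨fun x hx => (hcoeff hODE hx).1 (H x hx).1, hODE⟩
  · rintro ⟨hf₂, hODE⟩ x hx
    exact ⟨(hcoeff hODE hx).2 (hf₂ x hx), hODE x hx⟩

theorem perturbed_harmonic_oscillator_characterization (σ s : ℝ) (hσ : -(1/2) < σ)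
    (hs : 0 < s) (U : Set ℝ) (hU : IsOpen U) (hUsub : U ⊆ Set.Ioi (0 : ℝ))
    (f₁ f₂ h : ℝ → ℝ) (hf₁ : ContDiffOn ℝ 1 f₁ U) (hf₂ : ContinuousOn f₂ U)
    (hh : ContDiffOn ℝ 2 h U) (hhpos : ∀ x ∈ U, 0 < h x) :
    (∀ φ : SchwartzMap ℝ ℝ, (∀ x, φ (-x) = φ x) → ∀ x ∈ U,
        -deriv (deriv fun y => h y * φ y) x + s ^ 2 * x ^ 2 * (h x * φ x) -
            2 * f₁ x * deriv (fun y => h y * φ y) x + f₂ x * (h x * φ x) =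
          h x * dunklL σ s (⇑φ) x) ↔
      ((∀ x ∈ U, f₂ x = σ * (σ - 1) / x ^ 2 - f₁ x ^ 2 - deriv f₁ x) ∧
        ∃ F₁ : ℝ → ℝ, ContDiffOn ℝ 2 F₁ U ∧ (∀ x ∈ U, deriv F₁ x = f₁ x) ∧
          ∀ x ∈ U, h x = x ^ σ * Real.exp (-F₁ x)) :=
  perturbed_harmonic_oscillator_characterization_general σ s U hU hUsub f₁ f₂ h hf₁ hh hhpos
end
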